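/- arXiv:2605.05147 — 11 statements merged into one kernel-verified Lean document; each statement's English description precedes it below -/
import Mathlib

section
/- There exists a Cantor-type construction showing the second-order test is not necessary: if h: ℝ → ℝ is continuous, strictly increasing, with h' = 0 almost everywhere, then f(x) := ∫₀ˣ h(t) dt is strictly convex on ℝ but f'' = 0 almost everywhere. -/
open MeasureTheory

theorem Continuous.deriv_primitive {h : ℝ → ℝ} (hc : Continuous h) (a : ℝ) :
    deriv (fun x => ∫ t in a..x, h t) = h :=
  funext (hc.deriv_integral h a)

theorem StrictMono.strictConvexOn_primitive {h : ℝ → ℝ} (hc : Continuous h) (hm : StrictMono h)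
    (a : ℝ) : StrictConvexOn ℝ Set.univ (fun x => ∫ t in a..x, h t) := by
  have hF : Differentiable ℝ (fun x => ∫ t in a..x, h t) :=
    fun x => (hc.integral_hasStrictDerivAt a x).hasDerivAt.differentiableAt
  refine StrictMono.strictConvexOn_univ_of_deriv hF.continuous ?_
  rwa [hc.deriv_primitive]

theorem stmt3 (h : ℝ → ℝ) (hc : Continuous h) (hm : StrictMono h)
    (hz : ∀ᵐ x ∂volume, deriv h x = 0) :
    StrictConvexOn ℝ Set.univ (fun x => ∫ t in (0:ℝ)..x, h t) ∧
    ∀ᵐ x ∂volume, deriv (deriv (fun x => ∫ t in (0:ℝ)..x, h t)) x = 0 := by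
  refine ⟨hm.strictConvexOn_primitive hc 0, ?_⟩
  rwa [hc.deriv_primitive]
end

section
/- Let f: ℝ → ℝ ∪ {+∞} be proper, lower semicontinuous, and convex. If f is strictly convex on the interior of its domain, then f is strictly convex on its whole domain. -/
/-!
On its domain `f` is a real-valued convex function. If `z = a • x + b • y` lies strictly between
two points of the domain, it is also the combination `a • x' + b • y'` of the midpoints `x'` of
`[x, z]` and `y'` of `[z, y]`. These midpoints lie in the open segment `(x, y)`, which in `ℝ` is
contained in the interior of the domain, so `f z < a f x' + b f y'`, and convexity bounds the
right-hand side by `(a f x + b f y + f z) / 2`.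
-/

open scoped InnerProductSpace

variable {H : Type*} [NormedAddCommGroup H] [InnerProductSpace ℝ H] [CompleteSpace H]

/-- `f` is proper: not identically `⊤` and never `⊥`. -/
def IsProperFn (f : H → EReal) : Prop := (∃ x, f x ≠ ⊤) ∧ ∀ x, f x ≠ ⊥

/-- `f` is convex (as an extended-real-valued function). -/
def IsConvexFn (f : H → EReal) : Prop :=
  ∀ x y : H, ∀ t : ℝ, 0 < t → t < 1 →
    f ((1 - t) • x + t • y) ≤ ((1 - t : ℝ) : EReal) * f x + ((t : ℝ) : EReal) * f y

/-- `f` is strictly convex on the set `s`. -/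
def StrictConvexOnSet (f : H → EReal) (s : Set H) : Prop :=
  ∀ x ∈ s, ∀ y ∈ s, x ≠ y → ∀ t : ℝ, 0 < t → t < 1 →
    f ((1 - t) • x + t • y) < ((1 - t : ℝ) : EReal) * f x + ((t : ℝ) : EReal) * f y

/-- The effective domain of `f`. -/
def domFn (f : H → EReal) : Set H := {x | f x ≠ ⊤}

/-- `f` is strictly convex (on its domain). -/
def IsStrictConvexFn (f : H → EReal) : Prop := StrictConvexOnSet f (domFn f)

/-- The convex subdifferential of `f` at `x`. -/
def subdiff (f : H → EReal) (x : H) : Set H :=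
  {v | ∀ y : H, f x + ((⟪v, y - x⟫_ℝ : ℝ) : EReal) ≤ f y}

/-- The domain of the subdifferential. -/
def domSubdiff (f : H → EReal) : Set H := {x | (subdiff f x).Nonempty}

/-- `f` is almost strictly convex: strictly convex along every line segment in `dom ∂f`. -/
def AlmostStrictlyConvex (f : H → EReal) : Prop :=
  ∀ x₀ x₁ : H, x₀ ≠ x₁ → segment ℝ x₀ x₁ ⊆ domSubdiff f →
    StrictConvexOnSet f (segment ℝ x₀ x₁)

/-- `∂f` is strictly monotone. -/
def StrictlyMonotoneSubdiff (f : H → EReal) : Prop :=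
  ∀ x₀ x₁ v₀ v₁ : H, v₀ ∈ subdiff f x₀ → v₁ ∈ subdiff f x₁ → x₀ ≠ x₁ →
    0 < ⟪v₀ - v₁, x₀ - x₁⟫_ℝ

theorem ConvexOn.strictConvexOn_of_openSegment_subset {𝕜 E : Type*} [Field 𝕜] [LinearOrder 𝕜]
    [IsStrictOrderedRing 𝕜] [AddCommGroup E] [Module 𝕜 E] {s t : Set E} {g : E → 𝕜}
    (hg : ConvexOn 𝕜 s g) (ht : StrictConvexOn 𝕜 t g)
    (hseg : s.Pairwise fun x y => openSegment 𝕜 x y ⊆ t) : StrictConvexOn 𝕜 s g := by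
  refine ⟨hg.1, fun x hx y hy hxy a b ha hb hab => ?_⟩
  set z := a • x + b • y
  have hz : z ∈ s := hg.1 hx hy ha.le hb.le hab
  set x' := (2⁻¹ : 𝕜) • x + (2⁻¹ : 𝕜) • z
  set y' := (2⁻¹ : 𝕜) • z + (2⁻¹ : 𝕜) • y
  have hx' : x' ∈ t := hseg hx hy hxy ⟨2⁻¹ + a / 2, b / 2, by positivity, by positivity,
    by linear_combination hab / 2, by simp only [x', z]; module⟩
  have hy' : y' ∈ t := hseg hx hy hxy ⟨a / 2, 2⁻¹ + b / 2, by positivity, by positivity,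
    by linear_combination hab / 2, by simp only [y', z]; module⟩
  have hne : x' ≠ y' := by
    have : x' - y' = (2⁻¹ : 𝕜) • (x - y) := by simp only [x', y']; module
    rw [← sub_ne_zero, this, smul_ne_zero_iff]
    exact ⟨by norm_num, sub_ne_zero.2 hxy⟩
  have hcomb : a • x' + b • y' = z := by
    simp only [x', y', z]
    linear_combination (norm := module) (2⁻¹ : 𝕜) • hab • (a • x + b • y)
  have hgx' : g x' ≤ 2⁻¹ * g x + 2⁻¹ * g z :=
    hg.2 hx hz (by norm_num) (by norm_num) (by norm_num)
  have hgy' : g y' ≤ 2⁻¹ * g z + 2⁻¹ * g y :=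
    hg.2 hz hy (by norm_num) (by norm_num) (by norm_num)
  have hlt : g z < a * g x' + b * g y' := hcomb ▸ ht.2 hx' hy' hne ha hb hab
  have hgz : a * g z + b * g z = g z := by rw [← add_mul, hab, one_mul]
  simp only [smul_eq_mul]
  nlinarith [mul_le_mul_of_nonneg_left hgx' ha.le, mul_le_mul_of_nonneg_left hgy' hb.le]

namespace IsProperFn

variable {α : Type*} {f : α → EReal}

theorem coe_toReal (hp : IsProperFn f) {x : α} (hx : x ∈ domFn f) :
    ((f x).toReal : EReal) = f x :=
  EReal.coe_toReal hx (hp.2 x)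

theorem combo_eq_coe (hp : IsProperFn f) {x y : α} (hx : x ∈ domFn f) (hy : y ∈ domFn f)
    (t : ℝ) : ((1 - t : ℝ) : EReal) * f x + (t : EReal) * f y =
      (((1 - t) * (f x).toReal + t * (f y).toReal : ℝ) : EReal) := by
  conv_lhs => rw [← hp.coe_toReal hx, ← hp.coe_toReal hy]
  norm_cast

end IsProperFn

section

variable {E : Type*} [NormedAddCommGroup E] [InnerProductSpace ℝ E] {f : E → EReal}

theorem IsConvexFn.le_coe_combo (hc : IsConvexFn f) (hp : IsProperFn f) {x y : E}
    (hx : x ∈ domFn f) (hy : y ∈ domFn f) {t : ℝ} (ht0 : 0 < t) (ht1 : t < 1) :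
    f ((1 - t) • x + t • y) ≤ (((1 - t) * (f x).toReal + t * (f y).toReal : ℝ) : EReal) :=
  hp.combo_eq_coe hx hy t ▸ hc x y t ht0 ht1

theorem IsConvexFn.convex_domFn (hc : IsConvexFn f) (hp : IsProperFn f) :
    Convex ℝ (domFn f) := by
  refine convex_iff_forall_pos.2 fun x hx y hy a b ha hb hab => ?_
  obtain rfl : a = 1 - b := by linarith
  exact ne_top_of_le_ne_top (EReal.coe_ne_top _) (hc.le_coe_combo hp hx hy hb (by linarith))

theorem IsConvexFn.convexOn_toReal (hc : IsConvexFn f) (hp : IsProperFn f) :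
    ConvexOn ℝ (domFn f) fun x => (f x).toReal := by
  refine convexOn_iff_forall_pos.2 ⟨hc.convex_domFn hp, fun x hx y hy a b ha hb hab => ?_⟩
  obtain rfl : a = 1 - b := by linarith
  have hle := hc.le_coe_combo hp hx hy hb (by linarith)
  simpa only [smul_eq_mul, EReal.toReal_coe] using
    EReal.toReal_le_toReal hle (hp.2 _) (EReal.coe_ne_top _)

theorem StrictConvexOnSet.strictConvexOn_toReal {s : Set E} (hs : StrictConvexOnSet f s)
    (hp : IsProperFn f) (hconv : Convex ℝ s) (hsub : s ⊆ domFn f) :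
    StrictConvexOn ℝ s fun x => (f x).toReal := by
  refine ⟨hconv, fun x hx y hy hxy a b ha hb hab => ?_⟩
  obtain rfl : a = 1 - b := by linarith
  have hz := hsub (hconv hx hy ha.le hb.le hab)
  have hlt := hs x hx y hy hxy b hb (by linarith)
  rw [hp.combo_eq_coe (hsub hx) (hsub hy), ← hp.coe_toReal hz] at hlt
  exact EReal.coe_lt_coe_iff.1 hlt

theorem IsProperFn.strictConvexOnSet_of_strictConvexOn_toReal (hp : IsProperFn f) {s : Set E}
    (hsub : s ⊆ domFn f) (h : StrictConvexOn ℝ s fun x => (f x).toReal) :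
    StrictConvexOnSet f s := by
  intro x hx y hy hxy t ht0 ht1
  have hz := hsub (h.1 hx hy (sub_pos.2 ht1).le ht0.le (sub_add_cancel 1 t))
  rw [hp.combo_eq_coe (hsub hx) (hsub hy), ← hp.coe_toReal hz]
  exact EReal.coe_lt_coe_iff.2 (h.2 hx hy hxy (sub_pos.2 ht1) ht0 (sub_add_cancel 1 t))

end

theorem stmt4_general (f : ℝ → EReal) (hp : IsProperFn f)
    (hc : IsConvexFn f) (hs : StrictConvexOnSet f (interior (domFn f))) :
    IsStrictConvexFn f := by
  have hdom : Convex ℝ (domFn f) := hc.convex_domFn hp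
  have hint := hs.strictConvexOn_toReal hp hdom.interior interior_subset
  have hseg : (domFn f).Pairwise fun x y => openSegment ℝ x y ⊆ interior (domFn f) :=
    strictConvex_iff_openSegment_subset.1 (strictConvex_iff_convex.2 hdom)
  exact hp.strictConvexOnSet_of_strictConvexOn_toReal subset_rfl
    ((hc.convexOn_toReal hp).strictConvexOn_of_openSegment_subset hint hseg)

theorem stmt4 (f : ℝ → EReal) (hp : IsProperFn f) (hlsc : LowerSemicontinuous f)
    (hc : IsConvexFn f) (hs : StrictConvexOnSet f (interior (domFn f))) :
    IsStrictConvexFn f :=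
  stmt4_general f hp hc hs
end

section
/- Let H be a real Hilbert space, f: H → ℝ ∪ {+∞} proper, lsc, and convex, and suppose f is affine on a segment [x₀, x₁] with x₀ ≠ x₁. Then for every x in the open segment (x₀, x₁), ∂f(x) = ∂f(x₀) ∩ ∂f(x₁). -/
open scoped InnerProductSpace

variable {H : Type*} [NormedAddCommGroup H] [InnerProductSpace ℝ H] [CompleteSpace H]

/-!
A vector `v` is a subgradient of `f` at `z` exactly when `z` is a global minimiser of the tilted
function `f - ⟪v, ·⟫`. Tilting by a linear functional keeps `f` affine on `[x₀, x₁]`, and a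
function affine on a segment has a global minimum at an interior point iff it has one at both
endpoints: the affine relation forces both endpoint values down to the interior one.
-/

lemma EReal.add_coe_sub_le_iff {a b : EReal} {p q : ℝ} :
    a + ↑(q - p) ≤ b ↔ a - p ≤ b - q := by
  induction a using EReal.rec <;> induction b using EReal.rec
  case coe.coe a b =>
    norm_cast
    exact ⟨fun h => by linarith, fun h => by linarith⟩
  all_goals simp [← EReal.coe_sub]

lemma EReal.sub_coe_ne_bot {a : EReal} (ha : a ≠ ⊥) (r : ℝ) : a - r ≠ ⊥ := by
  rw [sub_eq_add_neg, ← EReal.coe_neg]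
  exact EReal.add_ne_bot_iff.2 ⟨ha, EReal.coe_ne_bot _⟩

lemma EReal.coe_mul_add_coe_mul_sub_coe {s t : ℝ} (hs : 0 < s) (ht : 0 < t) (p q : ℝ)
    {a b : EReal} (ha : a ≠ ⊥) (hb : b ≠ ⊥) :
    (s * a + t * b) - ↑(s * p + t * q) = s * (a - p) + t * (b - q) := by
  induction a using EReal.rec <;> induction b using EReal.rec
  case coe.coe a b =>
    norm_cast
    ring
  all_goals simp_all [EReal.coe_mul_top_of_pos, ← EReal.coe_mul, -EReal.coe_add, ← EReal.coe_sub]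

lemma EReal.coe_mul_add_coe_mul_self {t : ℝ} (ht₀ : 0 < t) (ht₁ : t < 1) (a : EReal) :
    ((1 - t : ℝ) : EReal) * a + t * a = a := by
  have ht₁' : 0 < 1 - t := by linarith
  induction a using EReal.rec
  · rw [EReal.coe_mul_bot_of_pos ht₁', EReal.coe_mul_bot_of_pos ht₀, EReal.bot_add]
  · norm_cast; ring
  · rw [EReal.coe_mul_top_of_pos ht₁', EReal.coe_mul_top_of_pos ht₀, EReal.top_add_top]

lemma EReal.le_coe_mul_add_coe_mul_of_le {t : ℝ} (ht₀ : 0 < t) (ht₁ : t < 1) {a b : EReal}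
    (ha : a ≠ ⊥) (hb : b ≠ ⊥) (h : ((1 - t : ℝ) : EReal) * a + t * b ≤ b) :
    a ≤ ((1 - t : ℝ) : EReal) * a + t * b := by
  have ht₁' : 0 < 1 - t := by linarith
  induction a using EReal.rec <;> induction b using EReal.rec
  all_goals first | exact absurd rfl ha | exact absurd rfl hb | skip
  · norm_cast at h ⊢
    nlinarith
  · rw [EReal.coe_mul_top_of_pos ht₀, ← EReal.coe_mul, EReal.coe_add_top]
    exact le_top
  · rw [EReal.coe_mul_top_of_pos ht₁', ← EReal.coe_mul, EReal.top_add_coe]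
  · rw [EReal.coe_mul_top_of_pos ht₁', EReal.coe_mul_top_of_pos ht₀, EReal.top_add_top]

theorem isMinOn_univ_iff_of_eq_convex_combination {α : Type*} {g : α → EReal} {x x₀ x₁ : α}
    {t : ℝ} (ht₀ : 0 < t) (ht₁ : t < 1) (h₀ : g x₀ ≠ ⊥) (h₁ : g x₁ ≠ ⊥)
    (hx : g x = ((1 - t : ℝ) : EReal) * g x₀ + t * g x₁) :
    IsMinOn g Set.univ x ↔ IsMinOn g Set.univ x₀ ∧ IsMinOn g Set.univ x₁ := by
  simp only [isMinOn_univ_iff]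
  constructor
  · intro hmin
    have hx' : g x = ((1 - (1 - t) : ℝ) : EReal) * g x₁ + ((1 - t : ℝ) : EReal) * g x₀ := by
      rw [sub_sub_cancel, add_comm, hx]
    have hle₀ : g x₀ ≤ g x :=
      hx ▸ EReal.le_coe_mul_add_coe_mul_of_le ht₀ ht₁ h₀ h₁ (hx ▸ hmin x₁)
    have hle₁ : g x₁ ≤ g x :=
      hx' ▸ EReal.le_coe_mul_add_coe_mul_of_le (by linarith) (by linarith) h₁ h₀ (hx' ▸ hmin x₀)
    exact ⟨fun y => hle₀.trans (hmin y), fun y => hle₁.trans (hmin y)⟩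
  · rintro ⟨hmin₀, hmin₁⟩ y
    have heq : g x₁ = g x₀ := le_antisymm (hmin₁ x₀) (hmin₀ x₁)
    rw [hx, heq, EReal.coe_mul_add_coe_mul_self ht₀ ht₁]
    exact hmin₀ y

omit [CompleteSpace H] in
theorem mem_subdiff_iff_isMinOn_sub_inner {f : H → EReal} {v z : H} :
    v ∈ subdiff f z ↔ IsMinOn (fun y => f y - ⟪v, y⟫_ℝ) Set.univ z := by
  simp only [subdiff, isMinOn_univ_iff, Set.mem_ofPred_eq, inner_sub_right,
    EReal.add_coe_sub_le_iff]

omit [CompleteSpace H] in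
theorem sub_inner_eq_convex_combination {f : H → EReal} (hbot : ∀ x, f x ≠ ⊥) (v x₀ x₁ : H)
    {t : ℝ} (ht₀ : 0 < t) (ht₁ : t < 1)
    (haff : f ((1 - t) • x₀ + t • x₁) = ((1 - t : ℝ) : EReal) * f x₀ + ((t : ℝ) : EReal) * f x₁) :
    f ((1 - t) • x₀ + t • x₁) - ⟪v, (1 - t) • x₀ + t • x₁⟫_ℝ =
      ((1 - t : ℝ) : EReal) * (f x₀ - ⟪v, x₀⟫_ℝ) + t * (f x₁ - ⟪v, x₁⟫_ℝ) := by
  rw [haff, inner_add_right, real_inner_smul_right, real_inner_smul_right]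
  exact EReal.coe_mul_add_coe_mul_sub_coe (by linarith) ht₀ _ _ (hbot x₀) (hbot x₁)

theorem stmt7_general (f : H → EReal) (hp : IsProperFn f) (x₀ x₁ : H)
    (haff : ∀ t : ℝ, 0 ≤ t → t ≤ 1 →
      f ((1 - t) • x₀ + t • x₁) = ((1 - t : ℝ) : EReal) * f x₀ + ((t : ℝ) : EReal) * f x₁) :
    ∀ x ∈ openSegment ℝ x₀ x₁, subdiff f x = subdiff f x₀ ∩ subdiff f x₁ := by
  rintro x ⟨s, t, hs, ht, hst, rfl⟩
  obtain rfl : s = 1 - t := by linarith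
  have ht₁ : t < 1 := by linarith
  ext v
  rw [Set.mem_inter_iff, mem_subdiff_iff_isMinOn_sub_inner, mem_subdiff_iff_isMinOn_sub_inner,
    mem_subdiff_iff_isMinOn_sub_inner]
  exact isMinOn_univ_iff_of_eq_convex_combination ht ht₁
    (EReal.sub_coe_ne_bot (hp.2 x₀) _) (EReal.sub_coe_ne_bot (hp.2 x₁) _)
    (sub_inner_eq_convex_combination hp.2 v x₀ x₁ ht ht₁ (haff t ht.le ht₁.le))

theorem stmt7 (f : H → EReal) (hp : IsProperFn f) (hlsc : LowerSemicontinuous f)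
    (hc : IsConvexFn f) (x₀ x₁ : H) (hne : x₀ ≠ x₁)
    (haff : ∀ t : ℝ, 0 ≤ t → t ≤ 1 →
      f ((1 - t) • x₀ + t • x₁) = ((1 - t : ℝ) : EReal) * f x₀ + ((t : ℝ) : EReal) * f x₁) :
    ∀ x ∈ openSegment ℝ x₀ x₁, subdiff f x = subdiff f x₀ ∩ subdiff f x₁ :=
  stmt7_general f hp x₀ x₁ haff
end

section
/- Let f: ℝ → ℝ ∪ {+∞} be proper, lsc, and convex. Then f is strictly convex if and only if ∂f is strictly monotone. -/
open scoped InnerProductSpace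

variable {H : Type*} [NormedAddCommGroup H] [InnerProductSpace ℝ H] [CompleteSpace H]

private lemma inner_mul' (v w : ℝ) : ⟪v, w⟫_ℝ = v * w := by
  simp [RCLike.inner_apply, mul_comm]

private lemma coe_comb' (s u w : ℝ) :
    ((1 - s : ℝ) : EReal) * (u : EReal) + ((s : ℝ) : EReal) * (w : EReal)
      = ((u + s * (w - u) : ℝ) : EReal) := by
  rw [← EReal.coe_mul, ← EReal.coe_mul, ← EReal.coe_add, EReal.coe_eq_coe_iff]
  ring

private lemma subdiff_ne_top' {f : ℝ → EReal} (hp : IsProperFn f) {x v : ℝ}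
    (hv : v ∈ subdiff f x) : f x ≠ ⊤ := by
  intro h
  obtain ⟨y, hy⟩ := hp.1
  have h2 := hv y
  rw [h, EReal.top_add_coe] at h2
  exact hy (top_le_iff.mp h2)

private lemma subgrad_real' {f : ℝ → EReal} {x v : ℝ} (hv : v ∈ subdiff f x)
    {a b y : ℝ} (ha : f x = (a : EReal)) (hb : f y = (b : EReal)) :
    a + v * (y - x) ≤ b := by
  have h := hv y
  rw [ha, hb, inner_mul'] at h
  exact_mod_cast h

theorem stmt8 (f : ℝ → EReal) (hp : IsProperFn f) (hlsc : LowerSemicontinuous f)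
    (hc : IsConvexFn f) :
    IsStrictConvexFn f ↔ StrictlyMonotoneSubdiff f := by
  constructor
  · -- strict convexity → strict monotonicity
    intro hsc x₀ x₁ v₀ v₁ hv₀ hv₁ hne
    have hx₀ : f x₀ ≠ ⊤ := subdiff_ne_top' hp hv₀
    have hx₁ : f x₁ ≠ ⊤ := subdiff_ne_top' hp hv₁
    obtain ⟨a, ha⟩ : ∃ a : ℝ, f x₀ = a := ⟨_, (EReal.coe_toReal hx₀ (hp.2 x₀)).symm⟩
    obtain ⟨b, hb⟩ : ∃ b : ℝ, f x₁ = b := ⟨_, (EReal.coe_toReal hx₁ (hp.2 x₁)).symm⟩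
    have hmid := hsc x₀ hx₀ x₁ hx₁ hne (1/2) (by norm_num) (by norm_num)
    rw [ha, hb, coe_comb'] at hmid
    have hm : (1 - (1/2 : ℝ)) • x₀ + (1/2 : ℝ) • x₁ = (x₀ + x₁)/2 := by
      simp [smul_eq_mul]; ring
    rw [hm] at hmid
    have hcmtop : f ((x₀ + x₁)/2) ≠ ⊤ := hmid.ne_top
    obtain ⟨cm, hcm⟩ : ∃ cm : ℝ, f ((x₀ + x₁)/2) = cm :=
      ⟨_, (EReal.coe_toReal hcmtop (hp.2 _)).symm⟩
    rw [hcm] at hmid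
    have hmid' : cm < a + (1/2) * (b - a) := by exact_mod_cast hmid
    have h1 : a + v₀ * ((x₀ + x₁)/2 - x₀) ≤ cm := subgrad_real' hv₀ ha hcm
    have h2 : b + v₁ * ((x₀ + x₁)/2 - x₁) ≤ cm := subgrad_real' hv₁ hb hcm
    rw [inner_mul']
    nlinarith [h1, h2, hmid']
  · -- strict monotonicity → strict convexity
    intro hmono x hx y hy hxy t ht0 ht1
    have hx' : f x ≠ ⊤ := hx
    have hy' : f y ≠ ⊤ := hy
    obtain ⟨a, ha⟩ : ∃ a : ℝ, f x = a := ⟨_, (EReal.coe_toReal hx' (hp.2 x)).symm⟩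
    obtain ⟨b, hb⟩ : ∃ b : ℝ, f y = b := ⟨_, (EReal.coe_toReal hy' (hp.2 y)).symm⟩
    by_contra hlt
    have heq : f ((1 - t) • x + t • y)
        = ((1 - t : ℝ) : EReal) * f x + ((t : ℝ) : EReal) * f y :=
      le_antisymm (hc x y t ht0 ht1) (not_lt.mp hlt)
    obtain ⟨d, hd⟩ : ∃ d : ℝ, d = y - x := ⟨_, rfl⟩
    have hd0 : d ≠ 0 := by rw [hd]; exact sub_ne_zero.mpr (Ne.symm hxy)
    obtain ⟨z, hz⟩ : ∃ z : ℝ → ℝ, z = fun s => x + s * d := ⟨_, rfl⟩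
    have hzc : ∀ s : ℝ, (1 - s) • x + s • y = z s := by
      intro s; simp only [hz, hd, smul_eq_mul]; ring
    obtain ⟨c, hcc⟩ : ∃ c : ℝ, c = b - a := ⟨_, rfl⟩
    have hb' : b = a + c := by rw [hcc]; ring
    have hz1 : z 1 = y := by simp only [hz, hd]; ring
    have hz0 : z 0 = x := by simp only [hz]; ring
    -- upper bound from convexity
    have hub : ∀ s : ℝ, 0 ≤ s → s ≤ 1 → f (z s) ≤ ((a + s * c : ℝ) : EReal) := by
      intro s hs0 hs1
      rcases eq_or_lt_of_le hs0 with h0 | h0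
      · rw [← h0, hz0, ha]; norm_cast; linarith
      rcases eq_or_lt_of_le hs1 with h1 | h1
      · rw [h1, hz1, hb]; norm_cast; rw [hb']; linarith
      · have h := hc x y s h0 h1
        rw [hzc, ha, hb, coe_comb', ← hcc] at h
        exact h
    have heqt : f (z t) = ((a + t * c : ℝ) : EReal) := by
      rw [← hzc, heq, ha, hb, coe_comb', ← hcc]
    -- f is affine on the segment
    have haff : ∀ s : ℝ, 0 ≤ s → s ≤ 1 → f (z s) = ((a + s * c : ℝ) : EReal) := by
      intro s hs0 hs1
      refine le_antisymm (hub s hs0 hs1) ?_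
      have hzs_top : f (z s) ≠ ⊤ := by
        intro htop
        have h := hub s hs0 hs1
        rw [htop, top_le_iff] at h
        exact EReal.coe_ne_top _ h
      obtain ⟨F, hF⟩ : ∃ F : ℝ, f (z s) = F := ⟨_, (EReal.coe_toReal hzs_top (hp.2 _)).symm⟩
      have hFle : F ≤ a + s * c := by
        have := hub s hs0 hs1; rw [hF] at this; exact_mod_cast this
      rw [hF, EReal.coe_le_coe_iff]
      rcases lt_trichotomy s t with hst | hst | hst
      · rcases eq_or_lt_of_le hs0 with h0 | h0
        · rw [← h0] at hF; rw [hz0, ha] at hF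
          have : F = a := by exact_mod_cast hF.symm
          rw [this, ← h0]; linarith
        · obtain ⟨τ, hτdef⟩ : ∃ τ : ℝ, τ = (t - s)/(1 - s) := ⟨_, rfl⟩
          have hτ0 : 0 < τ := by rw [hτdef]; exact div_pos (by linarith) (by linarith)
          have hτ1 : τ < 1 := by rw [hτdef]; exact (div_lt_one (by linarith)).mpr (by linarith)
          have hτ : τ * (1 - s) = t - s := by
            rw [hτdef]; exact div_mul_cancel₀ _ (by linarith : (0:ℝ) < 1 - s).ne'
          have hcomb : (1 - τ) • (z s) + τ • y = z t := by
            simp only [hz, hd, smul_eq_mul]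
            linear_combination (y - x) * hτ
          have h := hc (z s) y τ hτ0 hτ1
          rw [hcomb, heqt, hF, hb, coe_comb'] at h
          have hre : a + t * c ≤ F + τ * (b - F) := by exact_mod_cast h
          rw [hb'] at hre
          have key : (1 - τ) * (a + s * c) = a + t * c - τ * (a + c) := by
            linear_combination c * hτ
          have h2 : (1 - τ) * (a + s * c) ≤ (1 - τ) * F := by
            rw [key]; linarith [hre]
          exact (mul_le_mul_iff_right₀ (by linarith : (0:ℝ) < 1 - τ)).mp h2
      · rw [← hst] at heqt
        rw [heqt] at hF
        have : a + s * c = F := by exact_mod_cast hF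
        linarith
      · rcases eq_or_lt_of_le hs1 with h1 | h1
        · rw [h1] at hF; rw [hz1, hb] at hF
          have : F = b := by exact_mod_cast hF.symm
          rw [this, h1, hb']; linarith
        · obtain ⟨τ, hτdef⟩ : ∃ τ : ℝ, τ = t/s := ⟨_, rfl⟩
          have hτ0 : 0 < τ := by rw [hτdef]; exact div_pos ht0 (by linarith)
          have hτ1 : τ < 1 := by rw [hτdef]; exact (div_lt_one (by linarith)).mpr hst
          have hτ : τ * s = t := by
            rw [hτdef]; exact div_mul_cancel₀ _ (by linarith : (0:ℝ) < s).ne'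
          have hcomb : (1 - τ) • x + τ • (z s) = z t := by
            simp only [hz, hd, smul_eq_mul]
            linear_combination (y - x) * hτ
          have h := hc x (z s) τ hτ0 hτ1
          rw [hcomb, heqt, ha, hF, coe_comb'] at h
          have hre : a + t * c ≤ a + τ * (F - a) := by exact_mod_cast h
          have htc : t * c = τ * (s * c) := by linear_combination (-c) * hτ
          have key : 0 ≤ τ * (F - (a + s * c)) := by
            have : τ * (F - (a + s * c)) = τ * (F - a) - τ * (s * c) := by ring
            rw [this]; linarith [hre, htc]
          nlinarith [key, hτ0]
    -- the common slope is a subgradient at every interior point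
    have hsub : ∀ s : ℝ, 0 < s → s < 1 → (c/d) ∈ subdiff f (z s) := by
      intro s hs0 hs1 w
      obtain ⟨r, hrdef⟩ : ∃ r : ℝ, r = (w - x)/d := ⟨_, rfl⟩
      have hw : w = z r := by
        simp only [hz, hrdef]
        rw [div_mul_cancel₀ _ hd0]
        ring
      have hinner : ⟪c/d, w - z s⟫_ℝ = c * (r - s) := by
        rw [inner_mul', hw]
        simp only [hz]
        field_simp
        ring
      rw [haff s hs0.le hs1.le, hinner]
      rcases le_or_gt r 1 with hr1 | hr1
      · rcases le_or_gt 0 r with hr0 | hr0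
        · -- w in the segment
          rw [hw, haff r hr0 hr1, ← EReal.coe_add, EReal.coe_le_coe_iff]
          linarith
        · -- r < 0 : x lies between w and z s
          by_cases hwt : f w = ⊤
          · rw [hwt]; exact le_top
          obtain ⟨F, hF⟩ : ∃ F : ℝ, f w = F := ⟨_, (EReal.coe_toReal hwt (hp.2 _)).symm⟩
          obtain ⟨τ, hτdef⟩ : ∃ τ : ℝ, τ = s/(s - r) := ⟨_, rfl⟩
          have hτ0 : 0 < τ := by rw [hτdef]; exact div_pos hs0 (by linarith)
          have hτ1 : τ < 1 := by rw [hτdef]; exact (div_lt_one (by linarith)).mpr (by linarith)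
          have hτ : τ * (s - r) = s := by
            rw [hτdef]; exact div_mul_cancel₀ _ (by linarith : (0:ℝ) < s - r).ne'
          have hcomb : (1 - τ) • (z s) + τ • w = x := by
            rw [hw]
            simp only [hz, smul_eq_mul]
            linear_combination (-d) * hτ
          have h := hc (z s) w τ hτ0 hτ1
          rw [hcomb, ha, haff s hs0.le hs1.le, hF, coe_comb'] at h
          have hre : a ≤ (a + s * c) + τ * (F - (a + s * c)) := by exact_mod_cast h
          rw [hF, ← EReal.coe_add, EReal.coe_le_coe_iff]
          have htc : τ * (s * c) - τ * (r * c) = s * c := by linear_combination c * hτ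
          have key : 0 ≤ τ * (F - (a + s * c) + (s - r) * c) := by
            have hexp : τ * (F - (a + s * c) + (s - r) * c)
                = τ * (F - (a + s * c)) + (τ * (s * c) - τ * (r * c)) := by ring
            rw [hexp, htc]; linarith [hre]
          nlinarith [key, hτ0]
      · -- r > 1 : y lies between z s and w
        by_cases hwt : f w = ⊤
        · rw [hwt]; exact le_top
        obtain ⟨F, hF⟩ : ∃ F : ℝ, f w = F := ⟨_, (EReal.coe_toReal hwt (hp.2 _)).symm⟩
        obtain ⟨τ, hτdef⟩ : ∃ τ : ℝ, τ = (1 - s)/(r - s) := ⟨_, rfl⟩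
        have hτ0 : 0 < τ := by rw [hτdef]; exact div_pos (by linarith) (by linarith)
        have hτ1 : τ < 1 := by rw [hτdef]; exact (div_lt_one (by linarith)).mpr (by linarith)
        have hτ : τ * (r - s) = 1 - s := by
          rw [hτdef]; exact div_mul_cancel₀ _ (by linarith : (0:ℝ) < r - s).ne'
        have hcomb : (1 - τ) • (z s) + τ • w = y := by
          rw [hw]
          simp only [hz, hd, smul_eq_mul]
          linear_combination (y - x) * hτ
        have h := hc (z s) w τ hτ0 hτ1
        rw [hcomb, hb, haff s hs0.le hs1.le, hF, coe_comb'] at h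
        have hre : b ≤ (a + s * c) + τ * (F - (a + s * c)) := by exact_mod_cast h
        rw [hb'] at hre
        rw [hF, ← EReal.coe_add, EReal.coe_le_coe_iff]
        have htc : c * (1 - s) = τ * ((r - s) * c) := by linear_combination (-c) * hτ
        have key : 0 ≤ τ * (F - (a + s * c) - (r - s) * c) := by
          have hexp : τ * (F - (a + s * c) - (r - s) * c)
              = τ * (F - (a + s * c)) - τ * ((r - s) * c) := by ring
          rw [hexp, ← htc]; linarith [hre]
        nlinarith [key, hτ0]
    -- contradiction with strict monotonicity
    have h13 := hsub (1/3) (by norm_num) (by norm_num)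
    have h23 := hsub (2/3) (by norm_num) (by norm_num)
    have hne : z (1/3) ≠ z (2/3) := by
      simp only [hz]
      intro h
      exact hd0 (by linarith [add_left_cancel h])
    have hcon := hmono _ _ _ _ h13 h23 hne
    rw [inner_mul', sub_self, zero_mul] at hcon
    exact lt_irrefl 0 hcon
end

section
/- The function f: ℝ² → ℝ ∪ {+∞} defined by f(x₁,x₂) = x₂²/(2x₁) - 2√x₂ if x₁ > 0 and x₂ ≥ 0, f(0,0) = 0, and f = +∞ otherwise, is proper, lsc, convex, its gradient is strictly monotone on the open positive quadrant, but f is not strictly convex (it vanishes identically on the ray {(x₁, 0) : x₁ ≥ 0}). -/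
open scoped InnerProductSpace

variable {H : Type*} [NormedAddCommGroup H] [InnerProductSpace ℝ H] [CompleteSpace H]

open Classical in
noncomputable def rockF : EuclideanSpace ℝ (Fin 2) → EReal := fun p =>
  if 0 < p 0 ∧ 0 ≤ p 1 then (((p 1) ^ 2 / (2 * p 0) - 2 * Real.sqrt (p 1) : ℝ) : EReal)
  else if p = 0 then (0 : EReal) else ⊤

/-! ### auxiliary real lemmas -/

open Real

private lemma qolA (a b u v s t : ℝ) (ha : 0 < a) (hb : 0 < b) (hs : 0 < s) (ht : 0 < t) :
    (s*u + t*v)^2 / (2*(s*a + t*b)) ≤ s*(u^2/(2*a)) + t*(v^2/(2*b)) := by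
  rw [div_le_iff₀ (by positivity)]
  have expand : (s*(u^2/(2*a)) + t*(v^2/(2*b))) * (2*(s*a + t*b)) =
      (s*u^2*b + t*v^2*a) * (s*a + t*b) / (a*b) := by
    field_simp
  rw [expand, le_div_iff₀ (by positivity)]
  nlinarith [mul_nonneg (mul_nonneg hs.le ht.le) (sq_nonneg (u*b - v*a)), mul_pos ha hb]

private lemma qolA2 (a b u v : ℝ) (ha : 0 < a) (hb : 0 < b) :
    ((u+v)/2)^2 / (2*((a+b)/2)) ≤ (u^2/(2*a))/2 + (v^2/(2*b))/2 := by
  rw [div_le_iff₀ (by positivity)]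
  have expand : ((u^2/(2*a))/2 + (v^2/(2*b))/2) * (2*((a+b)/2)) =
      (u^2*b + v^2*a) * (a+b) / (4*(a*b)) := by
    field_simp; ring
  rw [expand, le_div_iff₀ (by positivity)]
  nlinarith [sq_nonneg (u*b - v*a), mul_pos ha hb]

private lemma qolB (a b u v : ℝ) (ha : 0 < a) (hb : 0 < b) (hne : u*b ≠ v*a) :
    ((u+v)/2)^2 / (2*((a+b)/2)) < (u^2/(2*a))/2 + (v^2/(2*b))/2 := by
  rw [div_lt_iff₀ (by positivity)]
  have key : 0 < (u*b - v*a)^2 := by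
    have : u*b - v*a ≠ 0 := sub_ne_zero.2 hne
    positivity
  have expand : ((u^2/(2*a))/2 + (v^2/(2*b))/2) * (2*((a+b)/2)) =
      (u^2*b + v^2*a) * (a+b) / (4*(a*b)) := by
    field_simp; ring
  rw [expand, lt_div_iff₀ (by positivity)]
  nlinarith [key, mul_pos ha hb]

private lemma sqrtA (u v s t : ℝ) (hu : 0 ≤ u) (hv : 0 ≤ v) (hs : 0 ≤ s) (ht : 0 ≤ t)
    (hst : s + t = 1) : s * sqrt u + t * sqrt v ≤ sqrt (s*u + t*v) := by
  have h1 := Real.sq_sqrt hu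
  have h2 := Real.sq_sqrt hv
  have h3 := Real.sqrt_nonneg u
  have h4 := Real.sqrt_nonneg v
  rw [Real.le_sqrt (by positivity) (by positivity)]
  have hseq : s = 1 - t := by linarith
  subst hseq
  nlinarith [mul_nonneg (mul_nonneg hs ht) (sq_nonneg (sqrt u - sqrt v))]

private lemma sqrtA2 (u v : ℝ) (hu : 0 ≤ u) (hv : 0 ≤ v) :
    (sqrt u + sqrt v)/2 ≤ sqrt ((u+v)/2) := by
  have h1 := Real.sq_sqrt hu
  have h2 := Real.sq_sqrt hv
  have h3 := Real.sqrt_nonneg u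
  have h4 := Real.sqrt_nonneg v
  rw [Real.le_sqrt (by positivity) (by positivity)]
  nlinarith [sq_nonneg (sqrt u - sqrt v)]

private lemma sqrtB (u v : ℝ) (hu : 0 ≤ u) (hv : 0 ≤ v) (hne : u ≠ v) :
    (sqrt u + sqrt v)/2 < sqrt ((u+v)/2) := by
  have h1 := Real.sq_sqrt hu
  have h2 := Real.sq_sqrt hv
  have h3 := Real.sqrt_nonneg u
  have h4 := Real.sqrt_nonneg v
  have h5 : sqrt u - sqrt v ≠ 0 :=
    sub_ne_zero.2 fun h => hne ((Real.sqrt_inj hu hv).1 h)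
  have key : 0 < (sqrt u - sqrt v)^2 := by positivity
  rw [Real.lt_sqrt (by positivity)]
  nlinarith [key]

private lemma tlesqrt (t : ℝ) (h0 : 0 ≤ t) (h1 : t ≤ 1) : t ≤ sqrt t := by
  nlinarith [Real.sq_sqrt h0, Real.sqrt_nonneg t, Real.sqrt_le_sqrt h1, Real.sqrt_one]

/-! ### rockF basics -/

local notation "E2" => EuclideanSpace ℝ (Fin 2)

noncomputable def rockG : E2 → ℝ := fun q => (q 1)^2 / (2 * q 0) - 2 * Real.sqrt (q 1)

lemma rock_region {q : E2} (h0 : 0 < q 0) (h1 : 0 ≤ q 1) :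
    rockF q = ((rockG q : ℝ) : EReal) := by
  simp only [rockF, rockG]
  rw [if_pos ⟨h0, h1⟩]

lemma e2_zero_apply (i : Fin 2) : (0 : E2) i = 0 := rfl

lemma rock_zero : rockF 0 = 0 := by
  simp only [rockF]
  rw [if_neg (by simp [e2_zero_apply])]
  simp

lemma rock_top {q : E2} (h : ¬(0 < q 0 ∧ 0 ≤ q 1)) (h0 : q ≠ 0) : rockF q = ⊤ := by
  simp only [rockF]
  rw [if_neg h, if_neg h0]

lemma rock_ne_bot (q : E2) : rockF q ≠ ⊥ := by
  simp only [rockF]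
  split_ifs
  · exact EReal.coe_ne_bot _
  · simp
  · simp

lemma e2_ext {p q : E2} (h0 : p 0 = q 0) (h1 : p 1 = q 1) : p = q := by
  ext i
  fin_cases i <;> assumption

lemma e2_combo_apply (s t : ℝ) (x y : E2) (i : Fin 2) :
    (s • x + t • y) i = s * x i + t * y i := rfl

lemma rock_dom {q : E2} (h : rockF q ≠ ⊤) : (0 < q 0 ∧ 0 ≤ q 1) ∨ q = 0 := by
  by_contra hc
  rw [not_or] at hc
  exact h (rock_top hc.1 hc.2)

/-- the key strict midpoint convexity on the open quadrant -/
lemma rock_mid_strict {p q : E2} (hp : 0 < p 0 ∧ 0 < p 1) (hq : 0 < q 0 ∧ 0 < q 1)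
    (hne : p ≠ q) :
    rockG ((2⁻¹ : ℝ) • (p + q)) < (rockG p + rockG q) / 2 := by
  set m : E2 := (2⁻¹ : ℝ) • (p + q) with hm
  have hm0 : m 0 = (p 0 + q 0)/2 := by
    show 2⁻¹ * (p 0 + q 0) = _ ; ring
  have hm1 : m 1 = (p 1 + q 1)/2 := by
    show 2⁻¹ * (p 1 + q 1) = _ ; ring
  have hcoord : p 0 ≠ q 0 ∨ p 1 ≠ q 1 := by
    by_contra hc
    push_neg at hc
    exact hne (e2_ext hc.1 hc.2)
  simp only [rockG, hm0, hm1]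
  by_cases h1 : p 1 = q 1
  · have h0 : p 0 ≠ q 0 := hcoord.resolve_right (fun h => (h h1).elim)
    have hq1 : p 1 * q 0 ≠ q 1 * p 0 := by
      rw [← h1]
      intro hcon
      exact h0 (by
        have := mul_left_cancel₀ (ne_of_gt hp.2) hcon
        exact this.symm ▸ rfl)
    have hQ := qolB (p 0) (q 0) (p 1) (q 1) hp.1 hq.1 hq1
    have hS := sqrtA2 (p 1) (q 1) hp.2.le hq.2.le
    linarith
  · have hQ := qolA2 (p 0) (q 0) (p 1) (q 1) hp.1 hq.1
    have hS := sqrtB (p 1) (q 1) hp.2.le hq.2.le h1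
    linarith

/-! ### lower semicontinuity -/

lemma rock_lower_bound (r : ℝ) (hr : r < 0) (q : E2) (hq : q 1 < (r/2)^2) :
    (r : EReal) < rockF q := by
  by_cases h : 0 < q 0 ∧ 0 ≤ q 1
  · rw [rock_region h.1 h.2, EReal.coe_lt_coe_iff]
    have hs : Real.sqrt (q 1) < -r/2 := by
      rw [Real.sqrt_lt' (by linarith)]
      calc q 1 < (r/2)^2 := hq
        _ = (-r/2)^2 := by ring
    have h2 : 0 ≤ (q 1)^2 / (2 * q 0) := div_nonneg (sq_nonneg _) (by linarith [h.1])
    simp only [rockG]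
    nlinarith
  · by_cases h0 : q = 0
    · rw [h0, rock_zero]
      exact_mod_cast hr
    · rw [rock_top h h0]
      exact EReal.coe_lt_top r

lemma rock_lsc : LowerSemicontinuous rockF := by
  intro p c hc
  have e0 : ContinuousAt (fun q : E2 => q 0) p := by fun_prop
  have e1 : ContinuousAt (fun q : E2 => q 1) p := by fun_prop
  -- zero-value case handler: p 1 = 0 and f p = 0
  have hzero : rockF p = 0 → p 1 = 0 → ∀ᶠ q in nhds p, c < rockF q := by
    intro hfp hp1
    rw [hfp] at hc
    induction c using EReal.rec with
    | bot =>
        filter_upwards with q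
        exact Ne.bot_lt (rock_ne_bot q)
    | coe r =>
        have hr : r < 0 := by exact_mod_cast hc
        have hev : ∀ᶠ q in nhds p, q 1 < (r/2)^2 := by
          apply e1.eventually_lt continuousAt_const
          rw [hp1]
          have : r ≠ 0 := ne_of_lt hr
          positivity
        filter_upwards [hev] with q hq
        exact rock_lower_bound r hr q hq
    | top => exact absurd hc (by simp)
  by_cases h0 : 0 < p 0
  · by_cases h1 : 0 ≤ p 1
    · by_cases h1' : 0 < p 1
      · -- interior of region: continuity
        have hg : ContinuousAt rockG p := by
          apply ContinuousAt.sub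
          · exact ((e1.pow 2).div (continuousAt_const.mul e0) (by positivity))
          · exact continuousAt_const.mul (Real.continuous_sqrt.continuousAt.comp e1)
        rw [rock_region h0 h1] at hc
        have hev0 : ∀ᶠ q in nhds p, 0 < q 0 := e0.eventually (lt_mem_nhds h0)
        have hev1 : ∀ᶠ q in nhds p, 0 < q 1 := e1.eventually (lt_mem_nhds h1')
        induction c using EReal.rec with
        | bot =>
            filter_upwards with q
            exact Ne.bot_lt (rock_ne_bot q)
        | coe r =>
            have hr : r < rockG p := by exact_mod_cast hc
            have hev2 : ∀ᶠ q in nhds p, r < rockG q := hg.eventually (lt_mem_nhds hr)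
            filter_upwards [hev0, hev1, hev2] with q hq0 hq1 hq2
            rw [rock_region hq0 hq1.le, gt_iff_lt, EReal.coe_lt_coe_iff]
            exact hq2
        | top => exact absurd hc (by simp)
      · -- p 1 = 0, value 0
        have hp1 : p 1 = 0 := le_antisymm (not_lt.1 h1') h1
        have hfp : rockF p = 0 := by
          rw [rock_region h0 h1]
          simp [rockG, hp1]
        exact hzero hfp hp1
    · -- p 1 < 0 : ⊤ on a neighborhood
      push_neg at h1
      have hev0 : ∀ᶠ q in nhds p, 0 < q 0 := e0.eventually (lt_mem_nhds h0)
      have hev1 : ∀ᶠ q in nhds p, q 1 < 0 := e1.eventually (gt_mem_nhds h1)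
      filter_upwards [hev0, hev1] with q hq0 hq1
      rw [rock_top (fun h => absurd h.2 (not_le.2 hq1))
        (fun h => by rw [h] at hq0; exact lt_irrefl 0 hq0)]
      exact lt_of_lt_of_le hc le_top
  · by_cases h0' : p 0 < 0
    · -- p 0 < 0 : ⊤ neighborhood
      have hev0 : ∀ᶠ q in nhds p, q 0 < 0 := e0.eventually (gt_mem_nhds h0')
      filter_upwards [hev0] with q hq0
      rw [rock_top (fun h => absurd h.1 (not_lt.2 hq0.le))
        (fun h => by rw [h] at hq0; exact lt_irrefl 0 hq0)]
      exact lt_of_lt_of_le hc le_top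
    · have hp0 : p 0 = 0 := le_antisymm (not_lt.1 h0) (not_lt.1 h0')
      rcases lt_trichotomy (p 1) 0 with h1 | h1 | h1
      · -- p 1 < 0 : ⊤ neighborhood
        have hev1 : ∀ᶠ q in nhds p, q 1 < 0 := e1.eventually (gt_mem_nhds h1)
        filter_upwards [hev1] with q hq1
        rw [rock_top (fun h => absurd h.2 (not_le.2 hq1))
          (fun h => by rw [h] at hq1; exact lt_irrefl 0 hq1)]
        exact lt_of_lt_of_le hc le_top
      · -- p = 0
        have hp : p = 0 := e2_ext (by simpa using hp0) (by simpa using h1)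
        exact hzero (by rw [hp, rock_zero]) h1
      · -- p 0 = 0, p 1 > 0 : f blows up to ⊤
        have hfp : rockF p = ⊤ := rock_top (fun h => by rw [hp0] at h; exact lt_irrefl 0 h.1)
          (fun h => by rw [h] at h1; simp [e2_zero_apply] at h1)
        rw [hfp] at hc
        induction c using EReal.rec with
        | bot =>
            filter_upwards with q
            exact Ne.bot_lt (rock_ne_bot q)
        | coe r =>
            set M : ℝ := |r| + 2 * Real.sqrt (2*(p 1)) + 1 with hM
            have hMpos : 0 < M := by positivity
            set δ : ℝ := ((p 1)/2)^2 / (2*M) with hδ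
            have hδpos : 0 < δ := by positivity
            have hev0 : ∀ᶠ q in nhds p, q 0 < δ :=
              e0.eventually (gt_mem_nhds (show p 0 < δ by rw [hp0]; exact hδpos))
            have hevl : ∀ᶠ q in nhds p, (p 1)/2 < q 1 :=
              e1.eventually (lt_mem_nhds (by linarith))
            have hevu : ∀ᶠ q in nhds p, q 1 < 2*(p 1) :=
              e1.eventually (gt_mem_nhds (by linarith))
            filter_upwards [hev0, hevl, hevu] with q hq0 hql hqu
            have hq1pos : 0 < q 1 := by linarith
            by_cases hreg : 0 < q 0
            · rw [rock_region hreg hq1pos.le, gt_iff_lt, EReal.coe_lt_coe_iff]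
              have hs : Real.sqrt (q 1) ≤ Real.sqrt (2*(p 1)) := Real.sqrt_le_sqrt hqu.le
              have hnum : ((p 1)/2)^2 < (q 1)^2 := by nlinarith
              have hd1 : ((p 1)/2)^2 / (2 * q 0) ≤ (q 1)^2 / (2 * q 0) := by
                gcongr
              have hd2 : ((p 1)/2)^2 / (2*δ) < ((p 1)/2)^2 / (2 * q 0) := by
                apply div_lt_div_of_pos_left (by positivity) (by linarith) (by linarith)
              have hd3 : ((p 1)/2)^2 / (2*δ) = M := by
                rw [hδ]; field_simp
              simp only [rockG]
              have habs : r ≤ |r| := le_abs_self r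
              nlinarith [hd1, hd2, hd3]
            · rw [rock_top (fun h => hreg h.1) (fun h => by rw [h] at hq1pos; exact lt_irrefl 0 hq1pos)]
              exact EReal.coe_lt_top r
        | top => exact absurd hc (by simp)

/-! ### convexity -/

lemma ereal_mul_ne_bot (t : ℝ) (ht : 0 < t) (x : EReal) (hx : x ≠ ⊥) :
    (t : EReal) * x ≠ ⊥ := by
  induction x using EReal.rec with
  | bot => exact absurd rfl hx
  | coe r => simp [← EReal.coe_mul]
  | top => rw [EReal.coe_mul_top_of_pos ht]; simp

lemma rock_convex : IsConvexFn rockF := by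
  intro x y t ht ht1
  have hspos : (0:ℝ) < 1 - t := by linarith
  by_cases hx : rockF x = ⊤
  · rw [hx, EReal.coe_mul_top_of_pos hspos,
      EReal.top_add_of_ne_bot (ereal_mul_ne_bot t ht _ (rock_ne_bot y))]
    exact le_top
  by_cases hy : rockF y = ⊤
  · rw [hy, EReal.coe_mul_top_of_pos ht]
    have : ((1 - t : ℝ) : EReal) * rockF x + ⊤ = ⊤ :=
      EReal.add_top_of_ne_bot (ereal_mul_ne_bot (1-t) hspos _ (rock_ne_bot x))
    rw [this]
    exact le_top
  rcases rock_dom hx with hxr | hx0 <;> rcases rock_dom hy with hyr | hy0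
  · -- both in open region
    have hz0 : 0 < ((1-t) • x + t • y) 0 := by
      rw [e2_combo_apply]
      have := hxr.1; have := hyr.1
      positivity
    have hz1 : 0 ≤ ((1-t) • x + t • y) 1 := by
      rw [e2_combo_apply]
      have := hxr.2; have := hyr.2
      positivity
    rw [rock_region hz0 hz1, rock_region hxr.1 hxr.2, rock_region hyr.1 hyr.2,
      ← EReal.coe_mul, ← EReal.coe_mul, ← EReal.coe_add, EReal.coe_le_coe_iff]
    simp only [rockG, e2_combo_apply]
    have hQ := qolA (x 0) (y 0) (x 1) (y 1) (1-t) t hxr.1 hyr.1 hspos ht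
    have hS := sqrtA (x 1) (y 1) (1-t) t hxr.2 hyr.2 hspos.le ht.le (by ring)
    nlinarith [hS]
  · -- y = 0
    subst hy0
    have hz0 : 0 < ((1-t) • x + t • (0:E2)) 0 := by
      rw [e2_combo_apply, e2_zero_apply]
      have := hxr.1
      nlinarith
    have hz1 : 0 ≤ ((1-t) • x + t • (0:E2)) 1 := by
      rw [e2_combo_apply, e2_zero_apply]
      have := hxr.2
      nlinarith
    rw [rock_region hz0 hz1, rock_region hxr.1 hxr.2, rock_zero, mul_zero, add_zero,
      ← EReal.coe_mul, EReal.coe_le_coe_iff]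
    simp only [rockG, e2_combo_apply, e2_zero_apply, mul_zero, add_zero]
    have hx0ne : x 0 ≠ 0 := ne_of_gt hxr.1
    have htne : (1 - t : ℝ) ≠ 0 := ne_of_gt hspos
    have e1 : ((1-t) * x 1)^2 / (2*((1-t) * x 0)) = (1-t) * ((x 1)^2 / (2 * x 0)) := by
      field_simp
    have e2 : Real.sqrt ((1-t) * x 1) = Real.sqrt (1-t) * Real.sqrt (x 1) :=
      Real.sqrt_mul hspos.le _
    have e3 : (1-t) * Real.sqrt (x 1) ≤ Real.sqrt (1-t) * Real.sqrt (x 1) :=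
      mul_le_mul_of_nonneg_right (tlesqrt _ hspos.le (by linarith)) (Real.sqrt_nonneg _)
    rw [e1, e2]
    nlinarith [e3]
  · -- x = 0
    subst hx0
    have hz0 : 0 < ((1-t) • (0:E2) + t • y) 0 := by
      rw [e2_combo_apply, e2_zero_apply]
      have := hyr.1
      nlinarith
    have hz1 : 0 ≤ ((1-t) • (0:E2) + t • y) 1 := by
      rw [e2_combo_apply, e2_zero_apply]
      have := hyr.2
      nlinarith
    rw [rock_region hz0 hz1, rock_region hyr.1 hyr.2, rock_zero, mul_zero, zero_add,
      ← EReal.coe_mul, EReal.coe_le_coe_iff]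
    simp only [rockG, e2_combo_apply, e2_zero_apply, mul_zero, zero_add]
    have hy0ne : y 0 ≠ 0 := ne_of_gt hyr.1
    have htne : (t : ℝ) ≠ 0 := ne_of_gt ht
    have e1 : (t * y 1)^2 / (2*(t * y 0)) = t * ((y 1)^2 / (2 * y 0)) := by
      field_simp
    have e2 : Real.sqrt (t * y 1) = Real.sqrt t * Real.sqrt (y 1) :=
      Real.sqrt_mul ht.le _
    have e3 : t * Real.sqrt (y 1) ≤ Real.sqrt t * Real.sqrt (y 1) :=
      mul_le_mul_of_nonneg_right (tlesqrt _ ht.le (by linarith)) (Real.sqrt_nonneg _)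
    rw [e1, e2]
    nlinarith [e3]
  · -- both 0
    subst hx0; subst hy0
    rw [smul_zero, smul_zero, add_zero, rock_zero, mul_zero, mul_zero, add_zero]

/-! ### strict monotonicity on the open quadrant -/

lemma rock_smono {p q v w : E2} (hp : 0 < p 0 ∧ 0 < p 1) (hq : 0 < q 0 ∧ 0 < q 1)
    (hv : v ∈ subdiff rockF p) (hw : w ∈ subdiff rockF q) (hne : p ≠ q) :
    0 < ⟪v - w, p - q⟫_ℝ := by
  set m : E2 := (2⁻¹ : ℝ) • (p + q) with hm
  have hm0 : 0 < m 0 := by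
    show 0 < 2⁻¹ * (p 0 + q 0)
    nlinarith [hp.1, hq.1]
  have hm1 : 0 < m 1 := by
    show 0 < 2⁻¹ * (p 1 + q 1)
    nlinarith [hp.2, hq.2]
  have h1 := hv m
  have h2 := hw m
  rw [rock_region hp.1 hp.2.le, rock_region hm0 hm1.le, ← EReal.coe_add,
    EReal.coe_le_coe_iff] at h1
  rw [rock_region hq.1 hq.2.le, rock_region hm0 hm1.le, ← EReal.coe_add,
    EReal.coe_le_coe_iff] at h2
  have hmid : rockG m < (rockG p + rockG q) / 2 := rock_mid_strict hp hq hne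
  have hmp : m - p = (2⁻¹ : ℝ) • (q - p) := by
    ext i
    show 2⁻¹ * (p i + q i) - p i = 2⁻¹ * (q i - p i)
    ring
  have hmq : m - q = (2⁻¹ : ℝ) • (p - q) := by
    ext i
    show 2⁻¹ * (p i + q i) - q i = 2⁻¹ * (p i - q i)
    ring
  rw [hmp, real_inner_smul_right, inner_sub_right] at h1
  rw [hmq, real_inner_smul_right, inner_sub_right] at h2
  rw [inner_sub_left, inner_sub_right, inner_sub_right]
  linarith

/-! ### the ray where f vanishes -/

lemma rock_ray (x₁ : ℝ) (h : 0 ≤ x₁) :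
    rockF ((EuclideanSpace.equiv (Fin 2) ℝ).symm ![x₁, 0]) = 0 := by
  set p : E2 := (EuclideanSpace.equiv (Fin 2) ℝ).symm ![x₁, 0] with hp
  have hp0 : p 0 = x₁ := rfl
  have hp1 : p 1 = 0 := rfl
  rcases eq_or_lt_of_le h with h0 | h0
  · have : p = 0 := e2_ext (by rw [hp0, e2_zero_apply]; exact h0.symm)
      (by rw [hp1, e2_zero_apply])
    rw [this, rock_zero]
  · rw [rock_region (by rw [hp0]; exact h0) (by rw [hp1])]
    simp [rockG, hp1]

theorem stmt9 :
    IsProperFn rockF ∧ LowerSemicontinuous rockF ∧ IsConvexFn rockF ∧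
    (∀ p ∈ {q : EuclideanSpace ℝ (Fin 2) | 0 < q 0 ∧ 0 < q 1},
      ∀ q ∈ {q : EuclideanSpace ℝ (Fin 2) | 0 < q 0 ∧ 0 < q 1},
      ∀ v ∈ subdiff rockF p, ∀ w ∈ subdiff rockF q, p ≠ q → 0 < ⟪v - w, p - q⟫_ℝ) ∧
    ¬ IsStrictConvexFn rockF ∧
    (∀ x₁ : ℝ, 0 ≤ x₁ → rockF ((EuclideanSpace.equiv (Fin 2) ℝ).symm ![x₁, 0]) = 0) := by
  refine ⟨⟨⟨(EuclideanSpace.equiv (Fin 2) ℝ).symm ![1, 0], ?_⟩, rock_ne_bot⟩,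
    rock_lsc, rock_convex, ?_, ?_, rock_ray⟩
  · rw [rock_ray 1 zero_le_one]
    simp
  · intro p hp q hq v hv w hw hne
    exact rock_smono hp hq hv hw hne
  · intro hsc
    set a : E2 := (EuclideanSpace.equiv (Fin 2) ℝ).symm ![1, 0] with ha
    set b : E2 := (EuclideanSpace.equiv (Fin 2) ℝ).symm ![2, 0] with hb
    have ha0 : a 0 = 1 := rfl
    have ha1 : a 1 = 0 := rfl
    have hb0 : b 0 = 2 := rfl
    have hb1 : b 1 = 0 := rfl
    have hfa : rockF a = 0 := rock_ray 1 zero_le_one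
    have hfb : rockF b = 0 := rock_ray 2 (by norm_num)
    have hmemA : a ∈ domFn rockF := by rw [domFn, Set.mem_setOf_eq, hfa]; simp
    have hmemB : b ∈ domFn rockF := by rw [domFn, Set.mem_setOf_eq, hfb]; simp
    have hneq : a ≠ b := by
      intro h
      have : a 0 = b 0 := by rw [h]
      rw [ha0, hb0] at this
      norm_num at this
    have := hsc a hmemA b hmemB hneq (1/2) (by norm_num) (by norm_num)
    rw [hfa, hfb, mul_zero, mul_zero, add_zero] at this
    have hc0 : 0 < ((1 - 1/2 : ℝ) • a + (1/2 : ℝ) • b) 0 := by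
      rw [e2_combo_apply, ha0, hb0]
      norm_num
    have hc1 : ((1 - 1/2 : ℝ) • a + (1/2 : ℝ) • b) 1 = 0 := by
      rw [e2_combo_apply, ha1, hb1]
      ring
    rw [rock_region hc0 (le_of_eq hc1.symm)] at this
    simp only [rockG, e2_combo_apply] at this
    rw [ha1, hb1] at this
    norm_num [Real.sqrt_zero] at this
end

section
/- Let H be a real Hilbert space, f: H → ℝ ∪ {+∞} proper, lsc, convex, and suppose (xᵢ, vᵢ) ∈ graph ∂f for i = 0,1 satisfy ⟨v₀ - v₁, x₀ - x₁⟩ = 0. Then f is affine on the segment [x₀, x₁], and [v₀, v₁] ⊆ ∂f(x) for every x ∈ [x₀, x₁]; in particular [x₀, x₁] ⊆ dom ∂f. -/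
open scoped InnerProductSpace

variable {H : Type*} [NormedAddCommGroup H] [InnerProductSpace ℝ H] [CompleteSpace H]

/-! The subgradient inequalities of `v₀` at `x₁` and of `v₁` at `x₀` add up to
`⟪v₀ - v₁, x₀ - x₁⟫ ≥ 0`, so orthogonality makes both of them equalities. Hence the affine minorant
`y ↦ f x₀ + ⟪v₀, y - x₀⟫` agrees with the chord of `f` at both ends of `[x₀, x₁]`, and convexity
squeezes `f` onto it along the whole segment. A subgradient remains a subgradient wherever its
affine minorant touches `f`, so `v₀` and (symmetrically) `v₁` lie in `∂f(x)` for `x ∈ [x₀, x₁]`,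
and so does `[v₀, v₁]` because `∂f(x)` is convex. -/

section Subdifferential

variable {E : Type*} [NormedAddCommGroup E] [InnerProductSpace ℝ E] {f : E → EReal}
  {x₀ x₁ v₀ v₁ : E} {r₀ r₁ : ℝ}

theorem convex_subdiff (x : E) : Convex ℝ (subdiff f x) := by
  intro v hv w hw a b ha hb hab y
  have hcomb : ⟪a • v + b • w, y - x⟫_ℝ = a * ⟪v, y - x⟫_ℝ + b * ⟪w, y - x⟫_ℝ := by
    rw [inner_add_left, real_inner_smul_left, real_inner_smul_left]
  rw [hcomb]
  rcases le_total ⟪v, y - x⟫_ℝ ⟪w, y - x⟫_ℝ with h | h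
  · calc f x + ((a * ⟪v, y - x⟫_ℝ + b * ⟪w, y - x⟫_ℝ : ℝ) : EReal)
        ≤ f x + ((⟪w, y - x⟫_ℝ : ℝ) : EReal) := by
          gcongr
          linear_combination mul_le_mul_of_nonneg_left h ha + ⟪w, y - x⟫_ℝ * hab
      _ ≤ f y := hw y
  · calc f x + ((a * ⟪v, y - x⟫_ℝ + b * ⟪w, y - x⟫_ℝ : ℝ) : EReal)
        ≤ f x + ((⟪v, y - x⟫_ℝ : ℝ) : EReal) := by
          gcongr
          linear_combination mul_le_mul_of_nonneg_left h hb + ⟪v, y - x⟫_ℝ * hab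
      _ ≤ f y := hv y

theorem ne_top_of_mem_subdiff {x v : E} (hv : v ∈ subdiff f x) (hf : ∃ y, f y ≠ ⊤) : f x ≠ ⊤ := by
  obtain ⟨y, hy⟩ := hf
  intro hx
  have hle := hv y
  rw [hx, EReal.top_add_of_ne_bot (EReal.coe_ne_bot _), top_le_iff] at hle
  exact hy hle

theorem mem_subdiff_of_apply_eq {x z v : E} (hv : v ∈ subdiff f x)
    (hz : f z = f x + ((⟪v, z - x⟫_ℝ : ℝ) : EReal)) : v ∈ subdiff f z := by
  intro y
  rw [hz, add_assoc, ← EReal.coe_add, ← inner_add_right, sub_add_sub_cancel']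
  exact hv y

theorem IsConvexFn.le_chord (hc : IsConvexFn f) {t : ℝ} (h₀ : f x₀ = r₀) (h₁ : f x₁ = r₁)
    (ht₀ : 0 ≤ t) (ht₁ : t ≤ 1) :
    f ((1 - t) • x₀ + t • x₁) ≤ (((1 - t) * r₀ + t * r₁ : ℝ) : EReal) := by
  rcases ht₀.eq_or_lt with rfl | ht₀
  · simp [h₀]
  rcases ht₁.eq_or_lt with rfl | ht₁
  · simp [h₁]
  have hconv := hc x₀ x₁ t ht₀ ht₁
  rwa [h₀, h₁, ← EReal.coe_mul, ← EReal.coe_mul, ← EReal.coe_add] at hconv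

theorem inner_eq_sub_of_inner_sub_eq_zero (hv₀ : v₀ ∈ subdiff f x₀) (hv₁ : v₁ ∈ subdiff f x₁)
    (h₀ : f x₀ = r₀) (h₁ : f x₁ = r₁) (horth : ⟪v₀ - v₁, x₀ - x₁⟫_ℝ = 0) :
    ⟪v₀, x₁ - x₀⟫_ℝ = r₁ - r₀ ∧ ⟪v₁, x₀ - x₁⟫_ℝ = r₀ - r₁ := by
  have hle₀ : r₀ + ⟪v₀, x₁ - x₀⟫_ℝ ≤ r₁ := by exact_mod_cast h₀ ▸ h₁ ▸ hv₀ x₁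
  have hle₁ : r₁ + ⟪v₁, x₀ - x₁⟫_ℝ ≤ r₀ := by exact_mod_cast h₀ ▸ h₁ ▸ hv₁ x₀
  have hexpand : ⟪v₀ - v₁, x₀ - x₁⟫_ℝ = -(⟪v₀, x₁ - x₀⟫_ℝ + ⟪v₁, x₀ - x₁⟫_ℝ) := by
    simp only [inner_sub_left, inner_sub_right]
    ring
  constructor <;> linarith

theorem add_inner_eq_chord (hinner : ⟪v₀, x₁ - x₀⟫_ℝ = r₁ - r₀) (t : ℝ) :
    r₀ + ⟪v₀, (1 - t) • x₀ + t • x₁ - x₀⟫_ℝ = (1 - t) * r₀ + t * r₁ := by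
  rw [show (1 - t) • x₀ + t • x₁ - x₀ = t • (x₁ - x₀) by module, inner_smul_right, hinner]
  ring

theorem apply_eq_chord_of_mem_subdiff (hc : IsConvexFn f) (hv₀ : v₀ ∈ subdiff f x₀)
    (h₀ : f x₀ = r₀) (h₁ : f x₁ = r₁) (hinner : ⟪v₀, x₁ - x₀⟫_ℝ = r₁ - r₀) {t : ℝ}
    (ht₀ : 0 ≤ t) (ht₁ : t ≤ 1) :
    f ((1 - t) • x₀ + t • x₁) = (((1 - t) * r₀ + t * r₁ : ℝ) : EReal) := by
  refine le_antisymm (hc.le_chord h₀ h₁ ht₀ ht₁) ?_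
  rw [← add_inner_eq_chord hinner, EReal.coe_add, ← h₀]
  exact hv₀ _

theorem mem_subdiff_of_mem_segment (hc : IsConvexFn f) (hv₀ : v₀ ∈ subdiff f x₀)
    (h₀ : f x₀ = r₀) (h₁ : f x₁ = r₁) (hinner : ⟪v₀, x₁ - x₀⟫_ℝ = r₁ - r₀) {x : E}
    (hx : x ∈ segment ℝ x₀ x₁) : v₀ ∈ subdiff f x := by
  rw [segment_eq_image] at hx
  obtain ⟨t, ⟨ht₀, ht₁⟩, rfl⟩ := hx
  refine mem_subdiff_of_apply_eq hv₀ ?_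
  rw [apply_eq_chord_of_mem_subdiff hc hv₀ h₀ h₁ hinner ht₀ ht₁, ← add_inner_eq_chord hinner,
    EReal.coe_add, h₀]

end Subdifferential

theorem stmt11_general (f : H → EReal) (hp : IsProperFn f)
    (hc : IsConvexFn f) (x₀ x₁ v₀ v₁ : H)
    (hv₀ : v₀ ∈ subdiff f x₀) (hv₁ : v₁ ∈ subdiff f x₁)
    (horth : ⟪v₀ - v₁, x₀ - x₁⟫_ℝ = 0) :
    (∀ t : ℝ, 0 ≤ t → t ≤ 1 →
      f ((1 - t) • x₀ + t • x₁) = ((1 - t : ℝ) : EReal) * f x₀ + ((t : ℝ) : EReal) * f x₁) ∧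
    (∀ x ∈ segment ℝ x₀ x₁, segment ℝ v₀ v₁ ⊆ subdiff f x) ∧
    segment ℝ x₀ x₁ ⊆ domSubdiff f := by
  obtain ⟨hdom, hbot⟩ := hp
  obtain ⟨r₀, h₀⟩ : ∃ r : ℝ, f x₀ = r :=
    ⟨_, (EReal.coe_toReal (ne_top_of_mem_subdiff hv₀ hdom) (hbot x₀)).symm⟩
  obtain ⟨r₁, h₁⟩ : ∃ r : ℝ, f x₁ = r :=
    ⟨_, (EReal.coe_toReal (ne_top_of_mem_subdiff hv₁ hdom) (hbot x₁)).symm⟩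
  obtain ⟨hinner₀, hinner₁⟩ := inner_eq_sub_of_inner_sub_eq_zero hv₀ hv₁ h₀ h₁ horth
  have hsub : ∀ x ∈ segment ℝ x₀ x₁, segment ℝ v₀ v₁ ⊆ subdiff f x := fun x hx =>
    (convex_subdiff x).segment_subset (mem_subdiff_of_mem_segment hc hv₀ h₀ h₁ hinner₀ hx)
      (mem_subdiff_of_mem_segment hc hv₁ h₁ h₀ hinner₁ (segment_symm ℝ x₀ x₁ ▸ hx))
  refine ⟨fun t ht₀ ht₁ => ?_, hsub, fun x hx => ⟨v₀, hsub x hx (left_mem_segment ℝ v₀ v₁)⟩⟩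
  rw [apply_eq_chord_of_mem_subdiff hc hv₀ h₀ h₁ hinner₀ ht₀ ht₁, h₀, h₁]
  norm_cast

theorem stmt11 (f : H → EReal) (hp : IsProperFn f) (hlsc : LowerSemicontinuous f)
    (hc : IsConvexFn f) (x₀ x₁ v₀ v₁ : H)
    (hv₀ : v₀ ∈ subdiff f x₀) (hv₁ : v₁ ∈ subdiff f x₁)
    (horth : ⟪v₀ - v₁, x₀ - x₁⟫_ℝ = 0) :
    (∀ t : ℝ, 0 ≤ t → t ≤ 1 →
      f ((1 - t) • x₀ + t • x₁) = ((1 - t : ℝ) : EReal) * f x₀ + ((t : ℝ) : EReal) * f x₁) ∧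
    (∀ x ∈ segment ℝ x₀ x₁, segment ℝ v₀ v₁ ⊆ subdiff f x) ∧
    segment ℝ x₀ x₁ ⊆ domSubdiff f :=
  stmt11_general f hp hc x₀ x₁ v₀ v₁ hv₀ hv₁ horth
end

section
/- Let H be a real Hilbert space and f: H → ℝ ∪ {+∞} proper, lsc, and convex. Then the following are equivalent: (i) f is almost strictly convex (strictly convex along every line segment contained in dom ∂f); (ii) ∂f is strictly monotone on every convex subset of dom ∂f; (iii) ∂f is strictly monotone on its whole graph. -/
/-!
(i) ⇒ (iii): if `⟪v₀ - v₁, x₀ - x₁⟫ ≤ 0`, adding the two subgradient inequalities forces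
`f x₁ = f x₀ + ⟪v₀, x₁ - x₀⟫`; by convexity `f` then coincides with this affine minorant on all of
`[x₀, x₁]`, so `v₀` is a subgradient along the whole segment while `f` is affine there.
(ii) ⇒ (i): if `f` touches a chord of a segment in `dom ∂f` at an interior point `z`, the supporting
hyperplane at `z` must pass through both ends of the chord, so a subgradient at `z` is one at two
distinct points. (iii) ⇒ (ii) is immediate.
-/

open scoped InnerProductSpace

variable {H : Type*} [NormedAddCommGroup H] [InnerProductSpace ℝ H] [CompleteSpace H]

section

variable {E : Type*} [NormedAddCommGroup E] [InnerProductSpace ℝ E]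

lemma IsProperFn.exists_eq_coe_of_mem_subdiff {f : E → EReal} (hp : IsProperFn f) {x v : E}
    (hv : v ∈ subdiff f x) : ∃ a : ℝ, f x = a := by
  obtain ⟨y, hy⟩ := hp.1
  have hx : f x ≠ ⊤ := by
    rintro htop
    have := hv y
    rw [htop, EReal.top_add_of_ne_bot (EReal.coe_ne_bot _)] at this
    exact hy (top_le_iff.mp this)
  exact ⟨(f x).toReal, (EReal.coe_toReal hx (hp.2 x)).symm⟩

lemma add_inner_le_of_mem_subdiff {f : E → EReal} {x y v : E} {a b : ℝ} (hv : v ∈ subdiff f x)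
    (ha : f x = a) (hb : f y = b) : a + ⟪v, y - x⟫_ℝ ≤ b := by
  have := hv y
  rw [ha, hb] at this
  exact_mod_cast this

lemma mem_subdiff_of_eq_add_inner {f : E → EReal} {x z v : E} (hv : v ∈ subdiff f z)
    (hx : f x = f z + (⟪v, x - z⟫_ℝ : EReal)) : v ∈ subdiff f x := by
  intro u
  have hsplit : ⟪v, u - z⟫_ℝ = ⟪v, x - z⟫_ℝ + ⟪v, u - x⟫_ℝ := by
    rw [← inner_add_right, sub_add_sub_cancel']
  rw [hx, add_assoc, ← EReal.coe_add, ← hsplit]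
  exact hv u

lemma inner_combo_sub (v x y : E) (t : ℝ) :
    ⟪v, (1 - t) • x + t • y - x⟫_ℝ = t * ⟪v, y - x⟫_ℝ := by
  rw [show (1 - t) • x + t • y - x = t • (y - x) by module, real_inner_smul_right]

lemma IsConvexFn.eq_add_inner_of_mem_subdiff {f : E → EReal} (hc : IsConvexFn f)
    {x₀ x₁ v : E} {a₀ t : ℝ} (hv : v ∈ subdiff f x₀) (ha₀ : f x₀ = a₀)
    (ha₁ : f x₁ = ((a₀ + ⟪v, x₁ - x₀⟫_ℝ : ℝ) : EReal)) (ht₀ : 0 < t) (ht₁ : t < 1) :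
    f ((1 - t) • x₀ + t • x₁) = f x₀ + (⟪v, (1 - t) • x₀ + t • x₁ - x₀⟫_ℝ : EReal) := by
  refine le_antisymm ?_ (hv _)
  calc f ((1 - t) • x₀ + t • x₁) ≤ ((1 - t : ℝ) : EReal) * f x₀ + ((t : ℝ) : EReal) * f x₁ :=
        hc x₀ x₁ t ht₀ ht₁
    _ = f x₀ + (⟪v, (1 - t) • x₀ + t • x₁ - x₀⟫_ℝ : EReal) := by
        rw [ha₀, ha₁, inner_combo_sub]
        norm_cast
        ring

lemma mem_subdiff_of_chord_le {f : E → EReal} {x y v : E} {a b c t : ℝ}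
    (hv : v ∈ subdiff f ((1 - t) • x + t • y)) (ht₀ : 0 < t) (ht₁ : t < 1) (ha : f x = a)
    (hb : f y = b) (hc : f ((1 - t) • x + t • y) = c) (hle : (1 - t) * a + t * b ≤ c) :
    v ∈ subdiff f x ∧ v ∈ subdiff f y := by
  set z := (1 - t) • x + t • y
  have hx := add_inner_le_of_mem_subdiff hv hc ha
  have hy := add_inner_le_of_mem_subdiff hv hc hb
  have hsum : (1 - t) * ⟪v, x - z⟫_ℝ + t * ⟪v, y - z⟫_ℝ = 0 := by
    simp only [z, inner_sub_right, inner_add_right, real_inner_smul_right]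
    ring
  -- the two inequalities, weighted by `1 - t` and `t`, add up to the reverse of `hle`
  have hx' : a = c + ⟪v, x - z⟫_ℝ := by
    nlinarith [mul_le_mul_of_nonneg_left hy ht₀.le]
  have hy' : b = c + ⟪v, y - z⟫_ℝ := by
    nlinarith [mul_le_mul_of_nonneg_left hx (sub_pos.2 ht₁).le]
  constructor <;> apply mem_subdiff_of_eq_add_inner hv <;> rw [hc] <;> norm_cast
  · rw [ha, hx']
  · rw [hb, hy']

lemma AlmostStrictlyConvex.strictlyMonotoneSubdiff {f : E → EReal} (h : AlmostStrictlyConvex f)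
    (hp : IsProperFn f) (hc : IsConvexFn f) : StrictlyMonotoneSubdiff f := by
  intro x₀ x₁ v₀ v₁ hv₀ hv₁ hne
  obtain ⟨a₀, ha₀⟩ := hp.exists_eq_coe_of_mem_subdiff hv₀
  obtain ⟨a₁, ha₁⟩ := hp.exists_eq_coe_of_mem_subdiff hv₁
  by_contra! hmono
  have h01 := add_inner_le_of_mem_subdiff hv₀ ha₀ ha₁
  have h10 := add_inner_le_of_mem_subdiff hv₁ ha₁ ha₀
  have ha₁' : f x₁ = ((a₀ + ⟪v₀, x₁ - x₀⟫_ℝ : ℝ) : EReal) := by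
    rw [ha₁, EReal.coe_eq_coe_iff]
    simp only [inner_sub_left, inner_sub_right] at hmono h01 h10 ⊢
    linarith
  have haff {t : ℝ} (ht₀ : 0 < t) (ht₁ : t < 1) :=
    hc.eq_add_inner_of_mem_subdiff hv₀ ha₀ ha₁' ht₀ ht₁
  have hseg : segment ℝ x₀ x₁ ⊆ domSubdiff f := by
    rw [← insert_endpoints_openSegment]
    rintro _ (rfl | rfl | ⟨s, t, hs, ht₀, hst, rfl⟩)
    · exact ⟨v₀, hv₀⟩
    · exact ⟨v₁, hv₁⟩
    · obtain rfl : s = 1 - t := by linarith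
      exact ⟨v₀, mem_subdiff_of_eq_add_inner hv₀ (haff ht₀ (by linarith))⟩
  have hlt := h x₀ x₁ hne hseg x₀ (left_mem_segment ℝ x₀ x₁) x₁ (right_mem_segment ℝ x₀ x₁) hne
    (1 / 2) (by norm_num) (by norm_num)
  rw [haff (by norm_num) (by norm_num), inner_combo_sub, ha₀, ha₁] at hlt
  norm_cast at hlt
  simp only [inner_sub_left, inner_sub_right] at hlt h01 h10 hmono
  linarith

lemma IsProperFn.almostStrictlyConvex {f : E → EReal} (hp : IsProperFn f)
    (h : ∀ x₀ x₁ : E, segment ℝ x₀ x₁ ⊆ domSubdiff f →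
      ∀ x ∈ segment ℝ x₀ x₁, ∀ y ∈ segment ℝ x₀ x₁, ∀ v ∈ subdiff f x, ∀ w ∈ subdiff f y,
        x ≠ y → 0 < ⟪v - w, x - y⟫_ℝ) :
    AlmostStrictlyConvex f := by
  intro x₀ x₁ _ hseg x hx y hy hxy t ht₀ ht₁
  have hz : (1 - t) • x + t • y ∈ segment ℝ x₀ x₁ :=
    convex_segment x₀ x₁ hx hy (by linarith) ht₀.le (by ring)
  obtain ⟨v, hv⟩ := hseg hz
  obtain ⟨a, ha⟩ := hp.exists_eq_coe_of_mem_subdiff (hseg hx).some_mem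
  obtain ⟨b, hb⟩ := hp.exists_eq_coe_of_mem_subdiff (hseg hy).some_mem
  obtain ⟨c, hc⟩ := hp.exists_eq_coe_of_mem_subdiff hv
  rw [ha, hb, hc]
  norm_cast
  by_contra! hle
  obtain ⟨hvx, hvy⟩ := mem_subdiff_of_chord_le hv ht₀ ht₁ ha hb hc hle
  simpa using h x₀ x₁ hseg x hx y hy v hvx v hvy hxy

end

theorem stmt12_general (f : H → EReal) (hp : IsProperFn f)
    (hc : IsConvexFn f) :
    (AlmostStrictlyConvex f ↔
      (∀ s : Set H, s ⊆ domSubdiff f → Convex ℝ s →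
        ∀ x₀ ∈ s, ∀ x₁ ∈ s, ∀ v₀ ∈ subdiff f x₀, ∀ v₁ ∈ subdiff f x₁,
          x₀ ≠ x₁ → 0 < ⟪v₀ - v₁, x₀ - x₁⟫_ℝ)) ∧
    (AlmostStrictlyConvex f ↔ StrictlyMonotoneSubdiff f) := by
  refine ⟨⟨fun h _ _ _ x₀ _ x₁ _ v₀ hv₀ v₁ hv₁ =>
      h.strictlyMonotoneSubdiff hp hc x₀ x₁ v₀ v₁ hv₀ hv₁, fun h => ?_⟩,
    ⟨fun h => h.strictlyMonotoneSubdiff hp hc, fun h => ?_⟩⟩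
  · exact hp.almostStrictlyConvex fun x₀ x₁ hseg => h _ hseg (convex_segment x₀ x₁)
  · exact hp.almostStrictlyConvex fun _ _ _ x _ y _ v hv w hw => h x y v w hv hw

theorem stmt12 (f : H → EReal) (hp : IsProperFn f) (hlsc : LowerSemicontinuous f)
    (hc : IsConvexFn f) :
    (AlmostStrictlyConvex f ↔
      (∀ s : Set H, s ⊆ domSubdiff f → Convex ℝ s →
        ∀ x₀ ∈ s, ∀ x₁ ∈ s, ∀ v₀ ∈ subdiff f x₀, ∀ v₁ ∈ subdiff f x₁,
          x₀ ≠ x₁ → 0 < ⟪v₀ - v₁, x₀ - x₁⟫_ℝ)) ∧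
    (AlmostStrictlyConvex f ↔ StrictlyMonotoneSubdiff f) :=
  stmt12_general f hp hc
end

section
/- Let H be a real Hilbert space and f: H → ℝ ∪ {+∞} proper, lsc, and convex. If dom ∂f is closed, then dom f = dom ∂f. -/
open scoped InnerProductSpace

variable {H : Type*} [NormedAddCommGroup H] [InnerProductSpace ℝ H] [CompleteSpace H]

open Filter Topology

-- L1
lemma sub_subset_dom (f : H → EReal) (hp : IsProperFn f) : domSubdiff f ⊆ domFn f := by
  rintro x ⟨v, hv⟩
  obtain ⟨x₀, hx₀⟩ := hp.1
  intro hx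
  have := hv x₀
  rw [hx, EReal.top_add_of_ne_bot (by exact EReal.coe_ne_bot _)] at this
  exact hx₀ (top_le_iff.mp this)

-- L2 : affine minorant
lemma affine_minorant (f : H → EReal) (hp : IsProperFn f) (hlsc : LowerSemicontinuous f)
    (hc : IsConvexFn f) : ∃ (ℓ : H →L[ℝ] ℝ) (b : ℝ), ∀ y, ((ℓ y + b : ℝ) : EReal) ≤ f y := by
  set epi : Set (H × ℝ) := {p | f p.1 ≤ (p.2 : EReal)} with hepi
  have hcl : IsClosed epi := by
    have h1 : IsClosed {p : H × EReal | f p.1 ≤ p.2} := hlsc.isClosed_epigraph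
    have : epi = (fun p : H × ℝ => (p.1, (p.2 : EReal))) ⁻¹' {p : H × EReal | f p.1 ≤ p.2} := rfl
    rw [this]
    exact h1.preimage (continuous_fst.prodMk (continuous_coe_real_ereal.comp continuous_snd))
  have hconv : Convex ℝ epi := by
    rintro ⟨y, s⟩ hy ⟨z, r⟩ hz a b ha hb hab
    simp only [hepi, Set.mem_setOf_eq] at hy hz ⊢
    have hfy : f y ≠ ⊤ := fun h => by simp [h] at hy
    have hfz : f z ≠ ⊤ := fun h => by simp [h] at hz
    have hfy' := hp.2 y; have hfz' := hp.2 z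
    set ry := (f y).toReal with hry
    set rz := (f z).toReal with hrz
    have hfyr : f y = (ry : EReal) := (EReal.coe_toReal hfy hfy').symm
    have hfzr : f z = (rz : EReal) := (EReal.coe_toReal hfz hfz').symm
    have hys : ry ≤ s := by rwa [hfyr, EReal.coe_le_coe_iff] at hy
    have hzs : rz ≤ r := by rwa [hfzr, EReal.coe_le_coe_iff] at hz
    rcases eq_or_lt_of_le hb with hb0 | hb0
    · have ha1 : a = 1 := by linarith
      subst ha1
      simp only [← hb0, zero_smul, add_zero, one_smul, smul_eq_mul, mul_zero, mul_one, zero_mul]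
      rw [hfyr]; exact_mod_cast by linarith
    rcases eq_or_lt_of_le ha with ha0 | ha0
    · have hb1 : b = 1 := by linarith
      subst hb1
      simp only [← ha0, zero_smul, zero_add, one_smul, smul_eq_mul, zero_mul, one_mul]
      rw [hfzr]; exact_mod_cast by linarith
    · have ha' : a = 1 - b := by linarith
      have := hc y z b hb0 (by linarith)
      rw [hfyr, hfzr, ← EReal.coe_mul, ← EReal.coe_mul, ← EReal.coe_add] at this
      calc f (a • y + b • z) = f ((1-b) • y + b • z) := by rw [ha']
        _ ≤ (((1-b) * ry + b * rz : ℝ) : EReal) := this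
        _ ≤ ((a • s + b • r : ℝ) : EReal) := by
            rw [EReal.coe_le_coe_iff, ha']; simp only [smul_eq_mul]
            nlinarith
  obtain ⟨x₀, hx₀⟩ := hp.1
  set r₀ := (f x₀).toReal with hr₀
  have hfx₀ : f x₀ = (r₀ : EReal) := (EReal.coe_toReal hx₀ (hp.2 x₀)).symm
  have hnot : (x₀, r₀ - 1) ∉ epi := by
    simp only [hepi, Set.mem_setOf_eq, hfx₀, EReal.coe_le_coe_iff, not_le]; linarith
  obtain ⟨L, u, hLu, hsep⟩ := geometric_hahn_banach_point_closed hconv hcl hnot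
  set α := L (0, 1) with hα
  have hdec : ∀ (y : H) (t : ℝ), L (y, t) = L (y, 0) + t * α := by
    intro y t
    have : (y, t) = (y, (0:ℝ)) + t • ((0:H), (1:ℝ)) := by
      simp [Prod.ext_iff]
    rw [this, map_add, map_smul, smul_eq_mul]
  have hmem : ∀ t : ℝ, r₀ ≤ t → (x₀, t) ∈ epi := by
    intro t ht
    simp only [hepi, Set.mem_setOf_eq, hfx₀]
    exact_mod_cast ht
  have hαpos : 0 < α := by
    by_contra h
    push_neg at h
    have h1 := hsep _ (hmem r₀ le_rfl)
    rw [hdec] at h1 hLu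
    nlinarith
  refine ⟨-(α⁻¹) • L.comp (ContinuousLinearMap.inl ℝ H ℝ), u / α, fun y => ?_⟩
  by_cases hy : f y = ⊤
  · rw [hy]; exact le_top
  · set ry := (f y).toReal with hry'
    have hfyr : f y = (ry : EReal) := (EReal.coe_toReal hy (hp.2 y)).symm
    have hmemy : (y, ry) ∈ epi := by simp [hepi, hfyr]
    have := hsep _ hmemy
    rw [hdec] at this
    rw [hfyr, EReal.coe_le_coe_iff]
    simp only [ContinuousLinearMap.coe_smul', Pi.smul_apply, ContinuousLinearMap.coe_comp',
      Function.comp_apply, ContinuousLinearMap.inl_apply, smul_eq_mul]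
    rw [show -α⁻¹ * L (y, 0) + u / α = (u - L (y, 0)) / α by field_simp; ring]
    exact le_of_lt ((div_lt_iff₀ hαpos).mpr (by linarith))


set_option maxHeartbeats 2000000 in
lemma prox_min (f : H → EReal) (hp : IsProperFn f) (hlsc : LowerSemicontinuous f)
    (hc : IsConvexFn f) (ℓ : H →L[ℝ] ℝ) (b : ℝ) (hlb : ∀ y, ((ℓ y + b : ℝ) : EReal) ≤ f y)
    (x : H) (hx : f x ≠ ⊤) (κ : ℝ) (hκ : 0 < κ) :
    ∃ z : H, ∀ y, f z + ((κ*‖z - x‖^2 : ℝ):EReal) ≤ f y + ((κ*‖y - x‖^2 : ℝ):EReal) := by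
  set g : H → EReal := fun y => f y + ((κ*‖y - x‖^2 : ℝ):EReal) with hg
  have hgne : ∀ y, g y ≠ ⊥ := fun y h =>
    (EReal.add_eq_bot_iff.mp h).elim (hp.2 y) (EReal.coe_ne_bot _)
  have hglow : ∀ y, ((b - ‖ℓ‖*‖x‖ - ‖ℓ‖^2/(4*κ) : ℝ) : EReal) ≤ g y := by
    intro y
    have h1 : ((ℓ y + b + κ*‖y - x‖^2 : ℝ) : EReal) ≤ g y := by
      rw [EReal.coe_add]
      exact add_le_add_left (hlb y) _
    refine le_trans ?_ h1
    rw [EReal.coe_le_coe_iff]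
    have h2 : -(‖ℓ‖ * ‖y‖) ≤ ℓ y := by
      have h3 : |ℓ y| ≤ ‖ℓ‖ * ‖y‖ := ℓ.le_opNorm y
      have h4 := neg_abs_le (ℓ y)
      linarith
    have h4 : ‖y‖ ≤ ‖y - x‖ + ‖x‖ := by
      simpa using norm_add_le (y - x) x
    have h5 : 0 ≤ ‖ℓ‖ := norm_nonneg _
    have h6 : ‖ℓ‖*‖y-x‖ - κ*‖y-x‖^2 ≤ ‖ℓ‖^2/(4*κ) := by
      rw [le_div_iff₀ (by positivity)]
      nlinarith [sq_nonneg (2*κ*‖y-x‖ - ‖ℓ‖)]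
    nlinarith [mul_le_mul_of_nonneg_left h4 h5]
  have hgx : g x = f x := by
    simp [hg]
  set m := ⨅ y, g y with hm
  have hmle : m ≤ f x := hgx ▸ iInf_le _ x
  have hmbot : m ≠ ⊥ := fun h => by
    have := le_iInf hglow
    rw [← hm, h, le_bot_iff] at this
    exact EReal.coe_ne_bot _ this
  have hmtop : m ≠ ⊤ := fun h => hx (top_le_iff.mp (h ▸ hmle))
  set mr := m.toReal with hmr
  have hmeq : m = (mr : EReal) := (EReal.coe_toReal hmtop hmbot).symm
  -- minimizing sequence
  have hseq : ∀ n : ℕ, ∃ z, g z < ((mr + 1/(n+1) : ℝ) : EReal) := by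
    intro n
    rw [← iInf_lt_iff, ← hm, hmeq, EReal.coe_lt_coe_iff]
    have : (0:ℝ) < 1/(n+1) := by positivity
    linarith
  choose y hy using hseq
  -- each g (y n) is real
  have hfin : ∀ n, g (y n) = (((g (y n)).toReal : ℝ) : EReal) := by
    intro n
    exact (EReal.coe_toReal (fun h => absurd (hy n) (by rw [h]; simp)) (hgne _)).symm
  set a : ℕ → ℝ := fun n => (g (y n)).toReal with ha
  have han : ∀ n, mr ≤ a n ∧ a n < mr + 1/(n+1) := by
    intro n
    constructor
    · have := iInf_le g (y n)
      rw [← hm, hmeq, hfin n, EReal.coe_le_coe_iff] at this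
      exact this
    · have := hy n
      rw [hfin n, EReal.coe_lt_coe_iff] at this
      exact this
  -- f (y n) real
  have hfyn' : ∀ n, f (y n) ≠ ⊤ := by
    intro n h
    have htop : g (y n) = ⊤ := by
      rw [hg]; simp only []
      rw [h, EReal.top_add_of_ne_bot (EReal.coe_ne_bot _)]
    exact absurd (hy n) (by rw [htop]; simp)
  have hfyn : ∀ n, f (y n) = (((f (y n)).toReal : ℝ) : EReal) := fun n =>
    (EReal.coe_toReal (hfyn' n) (hp.2 _)).symm
  set r : ℕ → ℝ := fun n => (f (y n)).toReal with hr
  have hadecomp : ∀ n, a n = r n + κ*‖y n - x‖^2 := by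
    intro n
    have : g (y n) = ((r n + κ*‖y n - x‖^2 : ℝ) : EReal) := by
      rw [hg]; simp only []
      rw [hfyn n, ← EReal.coe_add]
    rw [hfin n, EReal.coe_eq_coe_iff] at this
    exact this
  -- midpoint estimate
  have hmid : ∀ n p, κ/4 * ‖y n - y p‖^2 ≤ (a n + a p)/2 - mr := by
    intro n p
    set z := (1-(1/2:ℝ)) • y n + (1/2:ℝ) • y p with hz
    have h1 : m ≤ g z := iInf_le _ z
    have h2 : f z ≤ (((1/2)*(r n) + (1/2)*(r p) : ℝ) : EReal) := by
      have := hc (y n) (y p) (1/2) (by norm_num) (by norm_num)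
      rw [hfyn n, hfyn p, ← EReal.coe_mul, ← EReal.coe_mul, ← EReal.coe_add] at this
      convert this using 3 <;> norm_num [hr]
    have h3 : g z ≤ (((1/2)*(r n) + (1/2)*(r p) + κ*‖z - x‖^2 : ℝ) : EReal) := by
      rw [hg]; simp only []
      rw [EReal.coe_add]
      exact add_le_add_left h2 _
    have h4 : mr ≤ (1/2)*(r n) + (1/2)*(r p) + κ*‖z - x‖^2 := by
      have := le_trans h1 h3
      rw [hmeq, EReal.coe_le_coe_iff] at this
      exact this
    -- parallelogram
    have hpar := parallelogram_law_with_norm ℝ ((1/2:ℝ) • (y n - x)) ((1/2:ℝ) • (y p - x))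
    have hzx : z - x = (1/2:ℝ) • (y n - x) + (1/2:ℝ) • (y p - x) := by
      rw [hz]; module
    have hsub : (1/2:ℝ) • (y n - x) - (1/2:ℝ) • (y p - x) = (1/2:ℝ) • (y n - y p) := by
      module
    have e1 : ‖(1/2:ℝ) • (y n - x)‖ = (1/2) * ‖y n - x‖ := by
      rw [norm_smul]; simp
    have e2 : ‖(1/2:ℝ) • (y p - x)‖ = (1/2) * ‖y p - x‖ := by
      rw [norm_smul]; simp
    have e3 : ‖(1/2:ℝ) • (y n - y p)‖ = (1/2) * ‖y n - y p‖ := by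
      rw [norm_smul]; simp
    rw [hsub, e1, e2, e3] at hpar
    have han' := hadecomp n
    have hap' := hadecomp p
    rw [hzx] at h4
    nlinarith [hpar, h4, han', hap', norm_nonneg (y n - y p)]
  -- Cauchy
  have hcauchy : CauchySeq y := by
    rw [Metric.cauchySeq_iff']
    intro ε hε
    obtain ⟨N, hN⟩ := exists_nat_gt (4/(κ*ε^2))
    refine ⟨N, fun n hn => ?_⟩
    have key := hmid n N
    have h1 := (han n).2
    have h2 := (han N).2
    have h3 := (han n).1
    have h4 := (han N).1
    have h5 : (0:ℝ) < (N:ℝ)+1 := by positivity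
    have h6 : (0:ℝ) < (n:ℝ)+1 := by positivity
    have h7 : 1/((n:ℝ)+1) ≤ 1/((N:ℝ)+1) := by
      apply one_div_le_one_div_of_le h5
      have : (N:ℝ) ≤ n := by exact_mod_cast hn
      linarith
    have hd2 : ‖y n - y N‖^2 < ε^2 := by
      have h8 : κ/4 * ‖y n - y N‖^2 ≤ 1/((N:ℝ)+1) := by
        calc κ/4 * ‖y n - y N‖^2 ≤ (a n + a N)/2 - mr := key
        _ ≤ (1/((n:ℝ)+1) + 1/((N:ℝ)+1))/2 := by linarith
        _ ≤ 1/((N:ℝ)+1) := by linarith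
      have h9 : 4/(κ*ε^2) < N + 1 := by linarith [hN, Nat.cast_nonneg (α := ℝ) N]
      have h10 : 1/((N:ℝ)+1) < κ*ε^2/4 := by
        rw [div_lt_div_iff₀ h5 (by norm_num)] at *
        rw [div_lt_iff₀ (by positivity)] at h9
        nlinarith
      nlinarith
    rw [dist_eq_norm]
    have := norm_nonneg (y n - y N)
    nlinarith [hd2, hε]
  obtain ⟨z, hzt⟩ := cauchySeq_tendsto_of_complete hcauchy
  -- lsc of g
  have hgc : Continuous (fun y : H => ((κ*‖y - x‖^2 : ℝ):EReal)) :=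
    continuous_coe_real_ereal.comp (continuous_const.mul (((continuous_id.sub continuous_const).norm).pow 2))
  have hglsc : LowerSemicontinuous g :=
    hlsc.add' hgc.lowerSemicontinuous
      (fun w => EReal.continuousAt_add (Or.inr (EReal.coe_ne_bot _)) (Or.inr (EReal.coe_ne_top _)))
  have hgz : g z ≤ m := by
    have h1 : g z ≤ liminf g (𝓝 z) := hglsc.le_liminf z
    have h2 : liminf g (𝓝 z) ≤ liminf (g ∘ y) atTop := by
      calc liminf g (𝓝 z) ≤ liminf g (map y atTop) := liminf_le_liminf_of_le hzt
        _ = liminf (g ∘ y) atTop := (Filter.liminf_comp _ _ _).symm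
    by_contra hcon
    push_neg at hcon
    have h3 : m < liminf (g ∘ y) atTop := lt_of_lt_of_le hcon (le_trans h1 h2)
    obtain ⟨c, hc1, hc2⟩ := EReal.exists_between_coe_real h3
    have hc1' : mr < c := by rwa [hmeq, EReal.coe_lt_coe_iff] at hc1
    obtain ⟨N, hN⟩ := exists_nat_gt (1/(c - mr))
    have h4 : liminf (g ∘ y) atTop ≤ (c : EReal) := by
      apply liminf_le_of_frequently_le'
      apply Eventually.frequently
      rw [eventually_atTop]
      refine ⟨N, fun n hn => ?_⟩
      have h5 : (0:ℝ) < c - mr := by linarith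
      have h6 : 1/((n:ℝ)+1) ≤ c - mr := by
        rw [div_le_iff₀ (by positivity)]
        have : 1/(c-mr) < (n:ℝ)+1 := by
          have : (N:ℝ) ≤ n := by exact_mod_cast hn
          linarith
        rw [div_lt_iff₀ h5] at this
        nlinarith
      have := (han n).2
      show g (y n) ≤ (c : EReal)
      rw [hfin n, EReal.coe_le_coe_iff]
      linarith
    exact absurd (lt_of_lt_of_le hc2 h4) (lt_irrefl _)
  exact ⟨z, fun y' => le_trans (le_trans hgz (iInf_le _ y')) le_rfl⟩


-- L4: minimizer gives subgradient
lemma prox_subgrad (f : H → EReal) (hp : IsProperFn f) (hc : IsConvexFn f) (x : H) (κ : ℝ)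
    (hκ : 0 < κ) (z : H)
    (hmin : ∀ y, f z + ((κ*‖z - x‖^2 : ℝ):EReal) ≤ f y + ((κ*‖y - x‖^2 : ℝ):EReal))
    (hfz : f z ≠ ⊤) : ((2*κ) • (x - z)) ∈ subdiff f z := by
  intro y
  by_cases hy : f y = ⊤
  · rw [hy]; exact le_top
  set rz := (f z).toReal with hrz
  set ry := (f y).toReal with hry
  have hfzr : f z = (rz : EReal) := (EReal.coe_toReal hfz (hp.2 z)).symm
  have hfyr : f y = (ry : EReal) := (EReal.coe_toReal hy (hp.2 y)).symm
  have key : ∀ t : ℝ, 0 < t → t < 1 → rz ≤ ry + 2*κ*⟪z-x, y-z⟫_ℝ + (κ*‖y-z‖^2)*t := by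
    intro t ht0 ht1
    have hcv := hc z y t ht0 ht1
    rw [hfzr, hfyr, ← EReal.coe_mul, ← EReal.coe_mul, ← EReal.coe_add] at hcv
    set w := (1-t) • z + t • y with hw
    have hmw := hmin w
    have h1 : f w + ((κ*‖w - x‖^2 : ℝ):EReal) ≤ (((1-t)*rz + t*ry + κ*‖w - x‖^2 : ℝ):EReal) := by
      rw [EReal.coe_add]
      exact add_le_add_left hcv _
    have h2 : ((rz + κ*‖z - x‖^2 : ℝ):EReal) ≤ (((1-t)*rz + t*ry + κ*‖w - x‖^2 : ℝ):EReal) := by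
      refine le_trans ?_ (le_trans hmw h1)
      rw [hfzr, ← EReal.coe_add]
    rw [EReal.coe_le_coe_iff] at h2
    have hwx : w - x = (z - x) + t • (y - z) := by rw [hw]; module
    have hnorm : ‖w - x‖^2 = ‖z-x‖^2 + 2*(t*⟪z-x, y-z⟫_ℝ) + t^2*‖y-z‖^2 := by
      rw [hwx, @norm_add_sq_real, real_inner_smul_right, norm_smul]
      simp [abs_of_pos ht0]
      ring
    rw [hnorm] at h2
    have h3 : t*rz ≤ t*ry + κ*(2*(t*⟪z-x, y-z⟫_ℝ) + t^2*‖y-z‖^2) := by nlinarith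
    have h4 := (mul_le_mul_iff_right₀ ht0).mp (by nlinarith : t*rz ≤ t*(ry + 2*κ*⟪z-x, y-z⟫_ℝ + (κ*‖y-z‖^2)*t))
    linarith
  have hfinal : rz ≤ ry + 2*κ*⟪z-x, y-z⟫_ℝ := by
    by_contra h
    push_neg at h
    set δ := rz - (ry + 2*κ*⟪z-x, y-z⟫_ℝ) with hδ
    have hδ0 : 0 < δ := by linarith
    set c := κ*‖y-z‖^2 with hcdef
    have hc0 : 0 ≤ c := by positivity
    set t₀ := min (1/2) (δ/(2*(c+1))) with ht₀
    have ht₀0 : 0 < t₀ := lt_min (by norm_num) (by positivity)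
    have ht₀1 : t₀ < 1 := lt_of_le_of_lt (min_le_left _ _) (by norm_num)
    have := key t₀ ht₀0 ht₀1
    have h5 : t₀ ≤ δ/(2*(c+1)) := min_le_right _ _
    have h6 : c*t₀ ≤ c*(δ/(2*(c+1))) := mul_le_mul_of_nonneg_left h5 hc0
    have h7 : c*(δ/(2*(c+1))) < δ := by
      rw [mul_div_assoc', div_lt_iff₀ (by positivity)]
      nlinarith
    linarith
  rw [hfzr, hfyr, ← EReal.coe_add, EReal.coe_le_coe_iff]
  have hip : ⟪(2*κ) • (x - z), y - z⟫_ℝ = -(2*κ*⟪z-x, y-z⟫_ℝ) := by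
    rw [real_inner_smul_left, show x - z = -(z-x) by abel, inner_neg_left]
    ring
  rw [hip]
  linarith


theorem stmt14 (f : H → EReal) (hp : IsProperFn f) (hlsc : LowerSemicontinuous f)
    (hc : IsConvexFn f) (hclosed : IsClosed (domSubdiff f)) :
    domFn f = domSubdiff f := by
  apply Set.Subset.antisymm
  · intro x hx
    have hx' : f x ≠ ⊤ := hx
    rw [← hclosed.closure_eq]
    rw [Metric.mem_closure_iff]
    intro ε hε
    obtain ⟨ℓ, b, hlb⟩ := affine_minorant f hp hlsc hc
    set rx := (f x).toReal with hrx
    have hfxr : f x = (rx : EReal) := (EReal.coe_toReal hx' (hp.2 x)).symm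
    set C := rx - b + ‖ℓ‖*‖x‖ with hC
    set κ := (|C| + ‖ℓ‖*ε + 1)/ε^2 with hκdef
    have hκ : 0 < κ := by positivity
    obtain ⟨z, hzmin⟩ := prox_min f hp hlsc hc ℓ b hlb x hx' κ hκ
    have hminx : f z + ((κ*‖z - x‖^2 : ℝ):EReal) ≤ f x := by
      have := hzmin x
      simpa using this
    have hfz : f z ≠ ⊤ := by
      intro h
      rw [h, EReal.top_add_of_ne_bot (EReal.coe_ne_bot _)] at hminx
      exact hx' (top_le_iff.mp hminx)
    have hzsub : z ∈ domSubdiff f := ⟨_, prox_subgrad f hp hc x κ hκ z hzmin hfz⟩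
    refine ⟨z, hzsub, ?_⟩
    set rz := (f z).toReal with hrz
    have hfzr : f z = (rz : EReal) := (EReal.coe_toReal hfz (hp.2 z)).symm
    have hreal : rz + κ*‖z - x‖^2 ≤ rx := by
      rw [hfzr, hfxr, ← EReal.coe_add, EReal.coe_le_coe_iff] at hminx
      exact hminx
    have hlbz : ℓ z + b ≤ rz := by
      have := hlb z
      rw [hfzr, EReal.coe_le_coe_iff] at this
      exact this
    have hℓz : -(‖ℓ‖ * ‖z‖) ≤ ℓ z := by
      have h3 : |ℓ z| ≤ ‖ℓ‖ * ‖z‖ := ℓ.le_opNorm z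
      have h4 := neg_abs_le (ℓ z)
      linarith
    have hz4 : ‖z‖ ≤ ‖z - x‖ + ‖x‖ := by simpa using norm_add_le (z - x) x
    have hℓ0 : 0 ≤ ‖ℓ‖ := norm_nonneg _
    set d := ‖z - x‖ with hd
    have hd0 : 0 ≤ d := norm_nonneg _
    have hCd : κ*d^2 - ‖ℓ‖*d ≤ C := by
      have := mul_le_mul_of_nonneg_left hz4 hℓ0
      nlinarith
    by_contra hcon
    push_neg at hcon
    have hεd : ε ≤ d := by
      rw [dist_eq_norm, norm_sub_rev] at hcon
      exact hcon
    have hκε : κ*ε^2 = |C| + ‖ℓ‖*ε + 1 := by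
      rw [hκdef]
      field_simp
    have habs : C ≤ |C| := le_abs_self C
    have h0abs : 0 ≤ |C| := abs_nonneg C
    have s1 : ‖ℓ‖ ≤ κ*ε := by nlinarith
    have s2 : κ*ε^2 - ‖ℓ‖*ε ≤ κ*d^2 - ‖ℓ‖*d := by
      nlinarith [mul_nonneg (sub_nonneg.2 hεd) (show (0:ℝ) ≤ κ*(d+ε) - ‖ℓ‖ by nlinarith)]
    linarith
  · exact sub_subset_dom f hp
end

section
/- Let H be a real Hilbert space, f: H → ℝ ∪ {+∞} proper, lsc, convex, and almost strictly convex, and A: H → H a bounded linear injective operator with range A ∩ int(dom f) ≠ ∅. Then f ∘ A is almost strictly convex. -/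
open scoped InnerProductSpace

variable {H : Type*} [NormedAddCommGroup H] [InnerProductSpace ℝ H] [CompleteSpace H]

-- helper: a + t*b < u for all t ∈ (0,1)  ⟹  a ≤ u
lemma real_small {a b u : ℝ} (h : ∀ t : ℝ, 0 < t → t < 1 → a + t * b < u) : a ≤ u := by
  by_contra hu
  push_neg at hu
  rcases le_or_gt 0 b with hb | hb
  · have := h (1/2) (by norm_num) (by norm_num); nlinarith
  · set t := min (1/2) ((a - u)/(2 * (-b))) with htdef
    have hbne : b ≠ 0 := ne_of_lt hb
    have h1 : 0 < t := lt_min (by norm_num) (div_pos (by linarith) (by linarith))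
    have h2 : t < 1 := lt_of_le_of_lt (min_le_left _ _) (by norm_num)
    have h3 : t ≤ (a - u)/(2*(-b)) := min_le_right _ _
    have h4 := h t h1 h2
    have h5 : t * (-b) ≤ (a - u)/2 := by
      have he : ((a - u)/(2*(-b))) * (-b) = (a-u)/2 := by field_simp
      nlinarith
    nlinarith

lemma key_lemma (f : H → EReal) (hp : IsProperFn f) (hlsc : LowerSemicontinuous f)
    (hc : IsConvexFn f) (A : H →L[ℝ] H)
    (hq : (Set.range A ∩ interior (domFn f)).Nonempty)
    (x v : H) (hv : v ∈ subdiff (fun z => f (A z)) x) :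
    (subdiff f (A x)).Nonempty := by
  obtain ⟨u₀, ⟨p, hpu⟩, hu₀⟩ := hq
  have hvy : ∀ y : H, f (A x) + ((⟪v, y - x⟫_ℝ : ℝ) : EReal) ≤ f (A y) := hv
  -- f (A x) is finite
  have hfAp_ne_top : f (A p) ≠ ⊤ := by
    have : A p ∈ domFn f := interior_subset (by rwa [hpu])
    exact this
  have hfAx_ne_top : f (A x) ≠ ⊤ := by
    intro h
    have h1 := hvy p
    rw [h, EReal.top_add_coe] at h1
    exact hfAp_ne_top (top_le_iff.1 h1)
  have hfAx_ne_bot : f (A x) ≠ ⊥ := hp.2 _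
  set fx : ℝ := (f (A x)).toReal with hfxdef
  have hfx : f (A x) = (fx : EReal) := (EReal.coe_toReal hfAx_ne_top hfAx_ne_bot).symm
  -- the epigraph
  set Epi : Set (H × ℝ) := {q | f q.1 ≤ (q.2 : EReal)} with hEpidef
  have hEpiConv : Convex ℝ Epi := by
    rintro ⟨z, r⟩ hz ⟨w, s'⟩ hw a b ha hb hab
    rcases eq_or_lt_of_le ha with ha0 | ha0
    · have hb1 : b = 1 := by linarith
      simp only [← ha0, hb1, zero_smul, one_smul, zero_add]
      exact hw
    rcases eq_or_lt_of_le hb with hb0 | hb0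
    · have ha1 : a = 1 := by linarith
      simp only [← hb0, ha1, zero_smul, one_smul, add_zero]
      exact hz
    have hb1 : b < 1 := by linarith
    have ha1 : a = 1 - b := by linarith
    have hcc := hc z w b hb0 hb1
    have h1 : ((1 - b : ℝ) : EReal) * f z ≤ ((1 - b : ℝ) : EReal) * ((r : ℝ) : EReal) :=
      mul_le_mul_of_nonneg_left hz (by exact_mod_cast (by linarith : (0:ℝ) ≤ 1 - b))
    have h2 : ((b : ℝ) : EReal) * f w ≤ ((b : ℝ) : EReal) * ((s' : ℝ) : EReal) :=
      mul_le_mul_of_nonneg_left hw (by exact_mod_cast hb)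
    have : f ((1 - b) • z + b • w) ≤ (((1 - b) * r + b * s' : ℝ) : EReal) := by
      calc f ((1 - b) • z + b • w) ≤ _ := hcc
        _ ≤ ((1 - b : ℝ) : EReal) * ((r : ℝ) : EReal) + ((b : ℝ) : EReal) * ((s' : ℝ) : EReal) :=
            add_le_add h1 h2
        _ = (((1 - b) * r + b * s' : ℝ) : EReal) := by
            rw [EReal.coe_add, EReal.coe_mul, EReal.coe_mul]
    show f (a • z + b • w) ≤ ((a * r + b * s' : ℝ) : EReal)
    rw [ha1]
    exact this
  -- interior of Epi is nonempty (Baire)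
  have hEpiInt : ∃ q : H × ℝ, q ∈ interior Epi := by
    set F : ℕ → Set H := fun n =>
      Nat.rec ((interior (domFn f))ᶜ) (fun m _ => {u | f u ≤ ((m : ℝ) : EReal)}) n with hFdef
    have hFclosed : ∀ n, IsClosed (F n) := by
      intro n
      cases n with
      | zero => exact isOpen_interior.isClosed_compl
      | succ m => exact hlsc.isClosed_preimage _
    have hFunion : (⋃ n, F n) = Set.univ := by
      ext u
      simp only [Set.mem_iUnion, Set.mem_univ, iff_true]
      by_cases hu : f u = ⊤
      · exact ⟨0, fun hmem => (interior_subset hmem : u ∈ domFn f) hu⟩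
      · obtain ⟨n, hn⟩ := exists_nat_ge (f u).toReal
        refine ⟨n + 1, ?_⟩
        show f u ≤ ((n : ℝ) : EReal)
        calc f u = ((f u).toReal : EReal) := (EReal.coe_toReal hu (hp.2 u)).symm
          _ ≤ ((n : ℝ) : EReal) := EReal.coe_le_coe_iff.2 hn
    have hdense := dense_iUnion_interior_of_closed hFclosed hFunion
    obtain ⟨z, hzO, hzI⟩ :=
      hdense.inter_open_nonempty _ isOpen_interior ⟨u₀, hu₀⟩
    obtain ⟨n, hzn⟩ := Set.mem_iUnion.1 hzI
    cases n with
    | zero => exact absurd (interior_subset hzn) (by simpa using fun h => h hzO)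
    | succ m =>
      refine ⟨(z, (m : ℝ) + 1), ?_⟩
      have hopen : IsOpen ((interior (F (m+1))) ×ˢ Set.Ioi (m : ℝ)) :=
        isOpen_interior.prod isOpen_Ioi
      have hsub : (interior (F (m+1))) ×ˢ Set.Ioi (m : ℝ) ⊆ Epi := by
        rintro ⟨u, r⟩ ⟨hu, hr⟩
        have h1 : u ∈ F (m+1) := interior_subset hu
        have h1' : f u ≤ ((m : ℝ) : EReal) := h1
        exact h1'.trans (EReal.coe_le_coe_iff.2 (le_of_lt hr))
      exact mem_interior.2 ⟨_, hsub, hopen, hzn, by simp⟩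
  obtain ⟨z₁, hz₁⟩ := hEpiInt
  -- points of interior Epi are strictly above the graph
  have hIntLt : ∀ q : H × ℝ, q ∈ interior Epi → f q.1 < (q.2 : EReal) := by
    rintro ⟨u, r⟩ hq'
    obtain ⟨ε, hε, hball⟩ := Metric.mem_nhds_iff.1 (mem_interior_iff_mem_nhds.1 hq')
    have hmem : ((u, r - ε/2) : H × ℝ) ∈ Metric.ball ((u, r) : H × ℝ) ε := by
      rw [Metric.mem_ball, Prod.dist_eq, dist_self, Real.dist_eq]
      have habs : |r - ε/2 - r| = ε/2 := by
        rw [show r - ε/2 - r = -(ε/2) by ring, abs_neg, abs_of_pos (by linarith)]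
      rw [habs, max_eq_right (by linarith)]
      linarith
    have h1 : f u ≤ ((r - ε/2 : ℝ) : EReal) := hball hmem
    exact lt_of_le_of_lt h1 (EReal.coe_lt_coe_iff.2 (by linarith))
  -- the affine set D
  set c : ℝ := fx - ⟪v, x⟫_ℝ with hcdef
  set D : Set (H × ℝ) := {q | ∃ y : H, q = (A y, c + ⟪v, y⟫_ℝ)} with hDdef
  have hDconv : Convex ℝ D := by
    rintro q1 ⟨y1, rfl⟩ q2 ⟨y2, rfl⟩ a b ha hb hab
    refine ⟨a • y1 + b • y2, ?_⟩
    have h1 : A (a • y1 + b • y2) = a • (A y1) + b • (A y2) := by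
      simp [map_add, map_smul]
    have h2 : c + ⟪v, a • y1 + b • y2⟫_ℝ = a * (c + ⟪v, y1⟫_ℝ) + b * (c + ⟪v, y2⟫_ℝ) := by
      rw [inner_add_right, real_inner_smul_right, real_inner_smul_right]
      linear_combination c * hab.symm
    ext
    · simp [h1]
    · simp [h2]
  have hdisj : Disjoint (interior Epi) D := by
    rw [Set.disjoint_left]
    rintro q hqint ⟨y, rfl⟩
    have h1 : f (A y) < ((c + ⟪v, y⟫_ℝ : ℝ) : EReal) := hIntLt _ hqint
    have h2 : ((c + ⟪v, y⟫_ℝ : ℝ) : EReal) ≤ f (A y) := by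
      have hy := hvy y
      rw [hfx, ← EReal.coe_add] at hy
      have heq : c + ⟪v, y⟫_ℝ = fx + ⟪v, y - x⟫_ℝ := by
        rw [hcdef, inner_sub_right]; ring
      rw [heq]
      exact hy
    exact absurd (lt_of_le_of_lt h2 h1) (lt_irrefl _)
  obtain ⟨φ, ustar, hφ1, hφ2⟩ :=
    geometric_hahn_banach_open (hEpiConv.interior) isOpen_interior hDconv hdisj
  -- φ ≤ ustar on all of Epi
  have hφEpi : ∀ q ∈ Epi, φ q ≤ ustar := by
    intro q hq'
    have hcomb : ∀ t : ℝ, 0 < t → t < 1 → φ q + t * (φ z₁ - φ q) < ustar := by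
      intro t ht0 ht1
      have hmem : t • z₁ + (1 - t) • q ∈ interior Epi :=
        hEpiConv.combo_interior_closure_mem_interior hz₁ (subset_closure hq')
          ht0 (by linarith) (by ring)
      have hlt := hφ1 _ hmem
      rw [map_add, map_smul, map_smul] at hlt
      simp only [smul_eq_mul] at hlt
      nlinarith
    exact real_small hcomb
  -- decompose φ
  set s0 : ℝ := φ (0, 1) with hs0def
  set ψ : H → ℝ := fun u => φ (u, 0) with hψdef
  have hφdec : ∀ (u : H) (r : ℝ), φ (u, r) = ψ u + s0 * r := by
    intro u r
    have hpair : ((u, r) : H × ℝ) = (u, 0) + r • ((0 : H), (1 : ℝ)) := by ext <;> simp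
    calc φ (u, r) = φ ((u, 0) + r • ((0 : H), (1 : ℝ))) := by rw [← hpair]
      _ = φ (u, 0) + r * φ ((0 : H), (1 : ℝ)) := by rw [map_add, map_smul, smul_eq_mul]
      _ = ψ u + s0 * r := by simp only [hψdef, hs0def]; ring
  have hψadd : ∀ u u' : H, ψ (u + u') = ψ u + ψ u' := by
    intro u u'
    have hpair : ((u + u', 0) : H × ℝ) = (u, 0) + (u', 0) := by ext <;> simp
    simp only [hψdef]
    rw [hpair, map_add]
  have hψsmul : ∀ (t : ℝ) (u : H), ψ (t • u) = t * ψ u := by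
    intro t u
    have hpair : ((t • u, 0) : H × ℝ) = t • ((u, 0) : H × ℝ) := by ext <;> simp
    simp only [hψdef]
    rw [hpair, map_smul, smul_eq_mul]
  -- the linear part along D vanishes
  have hLsmul : ∀ (t : ℝ) (y : H), ψ (A (t • y)) + s0 * ⟪v, t • y⟫_ℝ
      = t * (ψ (A y) + s0 * ⟪v, y⟫_ℝ) := by
    intro t y
    rw [map_smul, hψsmul, real_inner_smul_right]
    ring
  have hLlb : ∀ y : H, ustar - s0 * c ≤ ψ (A y) + s0 * ⟪v, y⟫_ℝ := by
    intro y
    have hmem : ((A y, c + ⟪v, y⟫_ℝ) : H × ℝ) ∈ D := ⟨y, rfl⟩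
    have hy := hφ2 _ hmem
    rw [hφdec] at hy
    have hd : s0 * (c + ⟪v, y⟫_ℝ) = s0 * c + s0 * ⟪v, y⟫_ℝ := mul_add _ _ _
    linarith
  have hL0 : ∀ y : H, ψ (A y) + s0 * ⟪v, y⟫_ℝ = 0 := by
    intro y
    by_contra hLy
    have h1 := hLlb (((ustar - s0 * c - 1) / (ψ (A y) + s0 * ⟪v, y⟫_ℝ)) • y)
    rw [hLsmul] at h1
    rw [div_mul_cancel₀ _ hLy] at h1
    linarith
  -- evaluate at x
  have hDx : ((A x, fx) : H × ℝ) ∈ D := by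
    refine ⟨x, ?_⟩
    have hcx : c + ⟪v, x⟫_ℝ = fx := by rw [hcdef]; ring
    rw [hcx]
  have hux : ustar ≤ ψ (A x) + s0 * fx := by
    have hx' := hφ2 _ hDx
    rw [hφdec] at hx'
    exact hx'
  -- s0 ≤ 0
  have hz₁Epi : z₁ ∈ Epi := interior_subset hz₁
  have hs0le : s0 ≤ 0 := by
    by_contra hs0
    push_neg at hs0
    set r : ℝ := max z₁.2 ((ustar + 1 - ψ z₁.1) / s0) with hrdef
    have hEpir : ((z₁.1, r) : H × ℝ) ∈ Epi := by
      have h1 : f z₁.1 ≤ ((z₁.2 : ℝ) : EReal) := hz₁Epi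
      exact h1.trans (EReal.coe_le_coe_iff.2 (le_max_left _ _))
    have h2 := hφEpi _ hEpir
    rw [hφdec] at h2
    have h3 : (ustar + 1 - ψ z₁.1) / s0 ≤ r := le_max_right _ _
    have h4 : ustar + 1 - ψ z₁.1 ≤ s0 * r := by
      rw [div_le_iff₀ hs0] at h3; linarith
    linarith
  rcases eq_or_lt_of_le hs0le with hs0 | hs0
  · -- case s0 = 0 : contradiction
    exfalso
    have hψA : ∀ y : H, ψ (A y) = 0 := by
      intro y
      have h := hL0 y
      rw [hs0] at h
      simpa using h
    have hψdom : ∀ u : H, u ∈ domFn f → ψ u ≤ ustar := by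
      intro u hu
      have hEpiu : ((u, (f u).toReal) : H × ℝ) ∈ Epi := by
        show f u ≤ (((f u).toReal : ℝ) : EReal)
        rw [EReal.coe_toReal hu (hp.2 u)]
      have h := hφEpi _ hEpiu
      rw [hφdec, hs0] at h
      simpa using h
    have hust0 : ustar ≤ 0 := by
      have h := hux
      rw [hψA x, hs0] at h
      simpa using h
    have hψne : ∃ e : H, 0 < ψ e := by
      by_contra hno
      push_neg at hno
      have hψ0 : ∀ e : H, ψ e = 0 := by
        intro e
        have h1 := hno e
        have h2 := hno (-e)
        have hneg : ψ (-e) = -ψ e := by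
          have he' : (-e : H) = (-1 : ℝ) • e := by simp
          rw [he', hψsmul]; ring
        rw [hneg] at h2
        linarith
      have h1 := hφ1 _ hz₁
      have h2 := hφ2 _ hDx
      rcases z₁ with ⟨zu, zr⟩
      rw [hφdec] at h1
      rw [hφdec] at h2
      rw [hψ0, hs0] at h1
      rw [hψ0, hs0] at h2
      simp at h1 h2
      linarith
    obtain ⟨e, he⟩ := hψne
    have hene : e ≠ 0 := by
      intro h
      rw [h] at he
      have h0 : ψ (0 : H) = 0 := by
        have hpair : (((0 : H), (0 : ℝ)) : H × ℝ) = 0 := by ext <;> simp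
        simp only [hψdef]
        rw [hpair, map_zero]
      linarith
    obtain ⟨ε, hε, hball⟩ := Metric.mem_nhds_iff.1 (mem_interior_iff_mem_nhds.1 hu₀)
    have hnorm : (0:ℝ) < ‖e‖ := norm_pos_iff.2 hene
    have hnorm' : ‖e‖ ≠ 0 := ne_of_gt hnorm
    set δ : ℝ := ε / (2 * ‖e‖) with hδdef
    have hδpos : 0 < δ := div_pos hε (by linarith)
    have hδe : δ * ‖e‖ = ε / 2 := by rw [hδdef]; field_simp
    have hmem : u₀ + δ • e ∈ domFn f := by
      apply hball
      rw [Metric.mem_ball, dist_eq_norm]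
      have hsub : u₀ + δ • e - u₀ = δ • e := by abel
      rw [hsub, norm_smul, Real.norm_eq_abs, abs_of_pos hδpos]
      nlinarith
    have h1 := hψdom _ hmem
    have h2 : ψ (u₀ + δ • e) = δ * ψ e := by
      rw [hψadd, hψsmul]
      have h0 : ψ u₀ = 0 := by rw [← hpu]; exact hψA p
      rw [h0]; ring
    nlinarith
  · -- case s0 < 0 : construct the subgradient
    set Ψ : H →L[ℝ] ℝ := φ.comp (ContinuousLinearMap.inl ℝ H ℝ) with hΨdef
    have hΨψ : ∀ u : H, Ψ u = ψ u := fun u => rfl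
    set w : H := (-s0)⁻¹ • (InnerProductSpace.toDual ℝ H).symm Ψ with hwdef
    have hwinner : ∀ u : H, ⟪w, u⟫_ℝ = (-s0)⁻¹ * ψ u := by
      intro u
      rw [hwdef, real_inner_smul_left, InnerProductSpace.toDual_symm_apply, hΨψ]
    refine ⟨w, fun y' => ?_⟩
    by_cases hy' : f y' = ⊤
    · rw [hy']; exact le_top
    · set ry : ℝ := (f y').toReal with hrydef
      have hfy : f y' = (ry : EReal) := (EReal.coe_toReal hy' (hp.2 y')).symm
      have hEpiy : ((y', ry) : H × ℝ) ∈ Epi := by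
        show f y' ≤ ((ry : ℝ) : EReal)
        rw [hfy]
      have h1 := hφEpi _ hEpiy
      rw [hφdec] at h1
      have hkey : fx + ⟪w, y' - A x⟫_ℝ ≤ ry := by
        rw [hwinner]
        have hψsub : ψ (y' - A x) = ψ y' - ψ (A x) := by
          have hd : y' - A x = y' + (-1 : ℝ) • (A x) := by simp [sub_eq_add_neg]
          rw [hd, hψadd, hψsmul]; ring
        rw [hψsub]
        have hs0' : (0:ℝ) < -s0 := by linarith
        have hinv : (-s0)⁻¹ * (-s0) = 1 := inv_mul_cancel₀ (ne_of_gt hs0')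
        have hinvpos : (0:ℝ) < (-s0)⁻¹ := inv_pos.2 hs0'
        have hstep : ψ y' - ψ (A x) ≤ (-s0) * (ry - fx) := by nlinarith [h1, hux]
        have hstep2 : (-s0)⁻¹ * (ψ y' - ψ (A x)) ≤ (-s0)⁻¹ * ((-s0) * (ry - fx)) :=
          mul_le_mul_of_nonneg_left hstep (le_of_lt hinvpos)
        rw [← mul_assoc, hinv, one_mul] at hstep2
        linarith
      rw [hfx, hfy, ← EReal.coe_add]
      exact EReal.coe_le_coe_iff.2 hkey

theorem stmt16 (f : H → EReal) (hp : IsProperFn f) (hlsc : LowerSemicontinuous f)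
    (hc : IsConvexFn f) (ha : AlmostStrictlyConvex f)
    (A : H →L[ℝ] H) (hinj : Function.Injective A)
    (hq : (Set.range A ∩ interior (domFn f)).Nonempty) :
    AlmostStrictlyConvex (fun x => f (A x)) := by
  intro x₀ x₁ hne hseg
  have hAseg : segment ℝ (A x₀) (A x₁) ⊆ domSubdiff f := by
    rintro u ⟨a, b, ha', hb', hab, rfl⟩
    have hz : a • x₀ + b • x₁ ∈ segment ℝ x₀ x₁ := ⟨a, b, ha', hb', hab, rfl⟩
    obtain ⟨v, hv⟩ := hseg hz
    have hu : a • (A x₀) + b • (A x₁) = A (a • x₀ + b • x₁) := by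
      simp [map_add, map_smul]
    rw [hu]
    exact key_lemma f hp hlsc hc A hq _ v hv
  have hAne : A x₀ ≠ A x₁ := fun h => hne (hinj h)
  have hstrict := ha (A x₀) (A x₁) hAne hAseg
  intro x hx y hy hxy t ht0 ht1
  have hAx : A x ∈ segment ℝ (A x₀) (A x₁) := by
    obtain ⟨a, b, ha', hb', hab, rfl⟩ := hx
    exact ⟨a, b, ha', hb', hab, by simp [map_add, map_smul]⟩
  have hAy : A y ∈ segment ℝ (A x₀) (A x₁) := by
    obtain ⟨a, b, ha', hb', hab, rfl⟩ := hy
    exact ⟨a, b, ha', hb', hab, by simp [map_add, map_smul]⟩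
  have hAxy : A x ≠ A y := fun h => hxy (hinj h)
  have h := hstrict (A x) hAx (A y) hAy hAxy t ht0 ht1
  have hcombo : A ((1 - t) • x + t • y) = (1 - t) • (A x) + t • (A y) := by
    simp [map_add, map_smul]
  show f (A ((1 - t) • x + t • y)) < _
  rw [hcombo]
  exact h
end

section
/- Let H be a real Hilbert space and A: H → 2^H a paramonotone operator. Then A is strictly monotone if and only if A is disjointly injective, i.e., A(x) ∩ A(y) = ∅ whenever x ≠ y. -/
open scoped InnerProductSpace

variable {H : Type*} [NormedAddCommGroup H] [InnerProductSpace ℝ H] [CompleteSpace H]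

/-- A set-valued operator `A : H → 2^H` is monotone. -/
def MonotoneOp (A : H → Set H) : Prop :=
  ∀ x₀ x₁ v₀ v₁ : H, v₀ ∈ A x₀ → v₁ ∈ A x₁ → 0 ≤ ⟪v₀ - v₁, x₀ - x₁⟫_ℝ

/-- A set-valued operator is strictly monotone. -/
def StrictlyMonotoneOp (A : H → Set H) : Prop :=
  ∀ x₀ x₁ v₀ v₁ : H, v₀ ∈ A x₀ → v₁ ∈ A x₁ → x₀ ≠ x₁ → 0 < ⟪v₀ - v₁, x₀ - x₁⟫_ℝ

/-- A monotone operator is paramonotone. -/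
def Paramonotone (A : H → Set H) : Prop :=
  MonotoneOp A ∧
  ∀ x₀ x₁ v₀ v₁ : H, v₀ ∈ A x₀ → v₁ ∈ A x₁ → ⟪x₀ - x₁, v₀ - v₁⟫_ℝ = 0 →
    v₀ ∈ A x₁ ∧ v₁ ∈ A x₀

/-- A monotone operator is maximally monotone. -/
def MaximallyMonotoneOp (A : H → Set H) : Prop :=
  MonotoneOp A ∧
  ∀ x v : H, (∀ y w : H, w ∈ A y → 0 ≤ ⟪v - w, x - y⟫_ℝ) → v ∈ A x

section

omit [CompleteSpace H]

theorem StrictlyMonotoneOp.inter_eq_empty {A : H → Set H} (hA : StrictlyMonotoneOp A)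
    {x y : H} (hxy : x ≠ y) : A x ∩ A y = ∅ := by
  refine Set.eq_empty_of_forall_notMem fun v ⟨hvx, hvy⟩ => ?_
  simpa using hA x y v v hvx hvy hxy

theorem Paramonotone.mem_inter_of_inner_eq_zero {A : H → Set H} (hA : Paramonotone A)
    {x₀ x₁ v₀ v₁ : H} (h₀ : v₀ ∈ A x₀) (h₁ : v₁ ∈ A x₁) (h : ⟪v₀ - v₁, x₀ - x₁⟫_ℝ = 0) :
    v₀ ∈ A x₀ ∩ A x₁ :=
  ⟨h₀, (hA.2 x₀ x₁ v₀ v₁ h₀ h₁ (by rwa [real_inner_comm])).1⟩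

theorem Paramonotone.strictlyMonotoneOp {A : H → Set H} (hA : Paramonotone A)
    (hdisj : ∀ x y : H, x ≠ y → A x ∩ A y = ∅) : StrictlyMonotoneOp A := by
  intro x₀ x₁ v₀ v₁ h₀ h₁ hne
  refine (hA.1 x₀ x₁ v₀ v₁ h₀ h₁).lt_of_ne fun h => ?_
  have hv := hA.mem_inter_of_inner_eq_zero h₀ h₁ h.symm
  rwa [hdisj x₀ x₁ hne] at hv

end

theorem stmt17 (A : H → Set H) (hpara : Paramonotone A) :
    StrictlyMonotoneOp A ↔ ∀ x y : H, x ≠ y → A x ∩ A y = ∅ :=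
  ⟨fun hA _ _ => hA.inter_eq_empty, hpara.strictlyMonotoneOp⟩
end

section
/- Let H be a real Hilbert space and A: H → 2^H paramonotone and maximally monotone. Then the following are equivalent: (i) A is strictly monotone; (ii) A is strictly monotone on every line segment in dom A; (iii) A⁻¹ is at most single-valued; (iv) the resolvent J_A = (Id + A)⁻¹ is strictly nonexpansive, i.e., ‖J_A x - J_A y‖ < ‖x - y‖ for all x ≠ y; (v) Id - J_A is strictly monotone. -/
/-!
Strict monotonicity of a paramonotone `A` fails exactly when two distinct points share a value:
paramonotonicity turns `⟪x₀ - x₁, v₀ - v₁⟫ = 0` into `v₀ ∈ A x₁`. So every condition is compared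
with injectivity of `A⁻¹`. By maximality each fibre `A⁻¹ v` is convex, so two points sharing `v`
span a segment in `dom A` on which `A` is constant, against (ii). For `Jx ≠ Jy`, strict monotonicity
gives `‖Jx - Jy‖² < ⟪x - y, Jx - Jy⟫`, hence (iv), and (iv) gives `⟪(x - Jx) - (y - Jy), x - y⟫ > 0`.
Finally, if `v ∈ A x ∩ A y` then `J (x + v) = x` and `J (y + v) = y`, so `Id - J` takes the value
`v` at both `x + v` and `y + v`, against (v).
-/

open scoped InnerProductSpace

variable {H : Type*} [NormedAddCommGroup H] [InnerProductSpace ℝ H] [CompleteSpace H]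

section

variable {E : Type*} [NormedAddCommGroup E] [InnerProductSpace ℝ E]

def StrictlyMonotoneOnSegments (A : E → Set E) : Prop :=
  ∀ x₀ x₁ : E, x₀ ≠ x₁ → segment ℝ x₀ x₁ ⊆ {x | (A x).Nonempty} →
    ∀ y₀ ∈ segment ℝ x₀ x₁, ∀ y₁ ∈ segment ℝ x₀ x₁, ∀ v₀ ∈ A y₀, ∀ v₁ ∈ A y₁,
      y₀ ≠ y₁ → 0 < ⟪v₀ - v₁, y₀ - y₁⟫_ℝ

theorem norm_lt_norm_of_inner_sub_pos {a b : E} (h : 0 < ⟪b - a, a⟫_ℝ) : ‖a‖ < ‖b‖ := by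
  rw [inner_sub_left, real_inner_self_eq_norm_sq] at h
  have hcs := real_inner_le_norm b a
  have ha : 0 < ‖a‖ := by nlinarith [norm_nonneg b, norm_nonneg a]
  nlinarith

theorem inner_sub_pos_of_norm_lt {a b : E} (h : ‖a‖ < ‖b‖) : 0 < ⟪b - a, b⟫_ℝ := by
  rw [inner_sub_left, real_inner_self_eq_norm_sq]
  nlinarith [real_inner_le_norm a b, norm_nonneg a]

variable {A : E → Set E} {J : E → E}

theorem StrictlyMonotoneOp.eq_of_mem_of_mem (hA : StrictlyMonotoneOp A) {v x y : E}
    (hx : v ∈ A x) (hy : v ∈ A y) : x = y := by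
  by_contra hne
  simpa using hA x y v v hx hy hne

theorem Paramonotone.strictlyMonotoneOp_iff (hA : Paramonotone A) :
    StrictlyMonotoneOp A ↔ ∀ v x y : E, v ∈ A x → v ∈ A y → x = y := by
  refine ⟨fun hs v x y => hs.eq_of_mem_of_mem, fun hinj x₀ x₁ v₀ v₁ h₀ h₁ hne => ?_⟩
  refine (hA.1 x₀ x₁ v₀ v₁ h₀ h₁).lt_of_ne fun h => hne ?_
  exact hinj v₀ x₀ x₁ h₀ (hA.2 x₀ x₁ v₀ v₁ h₀ h₁ (by rw [real_inner_comm, h])).1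

theorem StrictlyMonotoneOp.strictlyMonotoneOnSegments (hA : StrictlyMonotoneOp A) :
    StrictlyMonotoneOnSegments A :=
  fun _ _ _ _ y₀ _ y₁ _ v₀ hv₀ v₁ hv₁ => hA y₀ y₁ v₀ v₁ hv₀ hv₁

theorem MaximallyMonotoneOp.mem_of_mem_segment (hA : MaximallyMonotoneOp A) {v x y : E}
    (hx : v ∈ A x) (hy : v ∈ A y) {z : E} (hz : z ∈ segment ℝ x y) : v ∈ A z := by
  obtain ⟨a, b, ha, hb, hab, rfl⟩ := hz
  refine hA.2 _ v fun p w hw => ?_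
  have hsplit : a • x + b • y - p = a • (x - p) + b • (y - p) := by
    rw [smul_sub, smul_sub, ← add_sub_add_comm, ← add_smul, hab, one_smul]
  rw [hsplit, inner_add_right, real_inner_smul_right, real_inner_smul_right]
  have hxp := hA.1 x p v w hx hw
  have hyp := hA.1 y p v w hy hw
  positivity

theorem MaximallyMonotoneOp.eq_of_mem_of_strictlyMonotoneOnSegments
    (hA : MaximallyMonotoneOp A) (hseg : StrictlyMonotoneOnSegments A) {v x y : E}
    (hx : v ∈ A x) (hy : v ∈ A y) : x = y := by
  by_contra hne
  have hdom : segment ℝ x y ⊆ {z | (A z).Nonempty} :=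
    fun z hz => ⟨v, hA.mem_of_mem_segment hx hy hz⟩
  simpa using hseg x y hne hdom x (left_mem_segment ℝ x y) y (right_mem_segment ℝ x y)
    v hx v hy hne

theorem MonotoneOp.resolvent_add_eq (hA : MonotoneOp A) (hJ : ∀ x, x - J x ∈ A (J x))
    {z v : E} (hv : v ∈ A z) : J (z + v) = z := by
  have h := hA z (J (z + v)) v (z + v - J (z + v)) hv (hJ (z + v))
  rw [show v - (z + v - J (z + v)) = -(z - J (z + v)) by abel, inner_neg_left,
    real_inner_self_eq_norm_sq] at h
  have hzero : ‖z - J (z + v)‖ = 0 := by nlinarith [norm_nonneg (z - J (z + v))]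
  exact (sub_eq_zero.mp (norm_eq_zero.mp hzero)).symm

theorem StrictlyMonotoneOp.norm_resolvent_sub_lt (hA : StrictlyMonotoneOp A)
    (hJ : ∀ x, x - J x ∈ A (J x)) {x y : E} (hxy : x ≠ y) : ‖J x - J y‖ < ‖x - y‖ := by
  rcases eq_or_ne (J x) (J y) with hJxy | hJxy
  · simpa [hJxy, sub_eq_zero] using hxy
  · refine norm_lt_norm_of_inner_sub_pos ?_
    have h := hA (J x) (J y) (x - J x) (y - J y) (hJ x) (hJ y) hJxy
    rwa [show x - J x - (y - J y) = x - y - (J x - J y) by abel] at h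

theorem inner_id_sub_resolvent_pos (hJ : ∀ x y : E, x ≠ y → ‖J x - J y‖ < ‖x - y‖)
    {x y : E} (hxy : x ≠ y) : 0 < ⟪(x - J x) - (y - J y), x - y⟫_ℝ := by
  rw [show x - J x - (y - J y) = x - y - (J x - J y) by abel]
  exact inner_sub_pos_of_norm_lt (hJ x y hxy)

theorem MonotoneOp.eq_of_mem_of_inner_id_sub_resolvent_pos (hA : MonotoneOp A)
    (hJ : ∀ x, x - J x ∈ A (J x))
    (hJA : ∀ x y : E, x ≠ y → 0 < ⟪(x - J x) - (y - J y), x - y⟫_ℝ) {v x y : E}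
    (hx : v ∈ A x) (hy : v ∈ A y) : x = y := by
  by_contra hne
  have h := hJA (x + v) (y + v) (by simpa using hne)
  simp [hA.resolvent_add_eq hJ hx, hA.resolvent_add_eq hJ hy] at h

end

theorem stmt18 (A : H → Set H) (hpara : Paramonotone A) (hmax : MaximallyMonotoneOp A)
    (J : H → H) (hJ : ∀ x : H, x - J x ∈ A (J x)) :
    (StrictlyMonotoneOp A ↔
      (∀ x₀ x₁ : H, x₀ ≠ x₁ → segment ℝ x₀ x₁ ⊆ {x | (A x).Nonempty} →
        ∀ y₀ ∈ segment ℝ x₀ x₁, ∀ y₁ ∈ segment ℝ x₀ x₁, ∀ v₀ ∈ A y₀, ∀ v₁ ∈ A y₁,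
          y₀ ≠ y₁ → 0 < ⟪v₀ - v₁, y₀ - y₁⟫_ℝ)) ∧
    (StrictlyMonotoneOp A ↔ (∀ v x y : H, v ∈ A x → v ∈ A y → x = y)) ∧
    (StrictlyMonotoneOp A ↔ (∀ x y : H, x ≠ y → ‖J x - J y‖ < ‖x - y‖)) ∧
    (StrictlyMonotoneOp A ↔
      (∀ x y : H, x ≠ y → 0 < ⟪(x - J x) - (y - J y), x - y⟫_ℝ)) := by
  have hinj := hpara.strictlyMonotoneOp_iff
  have h1to4 (hs : StrictlyMonotoneOp A) (x y : H) (hxy : x ≠ y) : ‖J x - J y‖ < ‖x - y‖ :=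
    hs.norm_resolvent_sub_lt hJ hxy
  have h4to5 (h4 : ∀ x y : H, x ≠ y → ‖J x - J y‖ < ‖x - y‖) (x y : H) (hxy : x ≠ y) :
      0 < ⟪(x - J x) - (y - J y), x - y⟫_ℝ :=
    inner_id_sub_resolvent_pos h4 hxy
  have h5to1 (h5 : ∀ x y : H, x ≠ y → 0 < ⟪(x - J x) - (y - J y), x - y⟫_ℝ) :
      StrictlyMonotoneOp A :=
    hinj.2 fun _ _ _ => hpara.1.eq_of_mem_of_inner_id_sub_resolvent_pos hJ h5
  have h2to1 (h2 : StrictlyMonotoneOnSegments A) : StrictlyMonotoneOp A :=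
    hinj.2 fun _ _ _ => hmax.eq_of_mem_of_strictlyMonotoneOnSegments h2
  exact ⟨⟨StrictlyMonotoneOp.strictlyMonotoneOnSegments, h2to1⟩, hinj, ⟨h1to4, h5to1 ∘ h4to5⟩,
    ⟨h4to5 ∘ h1to4, h5to1⟩⟩
end
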